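/- arXiv:2106.15695 — 8 statements merged into one kernel-verified Lean document; each statement's English description precedes it below -/
import Mathlib

section
/- Let Ω ⊆ ℂⁿ be a nonempty connected open set containing the origin that is invariant under coordinatewise multiplication by complex numbers of modulus one (i.e., if z ∈ Ω and |a_i| = 1 for all i, then (a₁z₁, …, aₙzₙ) ∈ Ω). Let μ ∈ ℤⁿ, and let f and g be holomorphic functions on Ω each satisfying the weight-μ equivariance f(a₁z₁, …, aₙzₙ) = a₁^{μ₁} ⋯ aₙ^{μₙ} f(z) (and likewise for g) for all such a and all z ∈ Ω. Then f and g are linearly dependent: there exist c₁, c₂ ∈ ℂ, not both zero, with c₁ f + c₂ g = 0 on Ω. -/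
/-!
On a line through `z` in the direction of a coordinate with `z i ≠ 0`, a weight-`μ` function
restricts to a holomorphic `ψ` with `ψ w = c * w ^ μ i` on the unit circle. The identity theorem
gives `ψ w = c * w ^ max (μ i) 0` on the disc: for `μ i < 0`, `w ^ (-μ i) * ψ w` is the constant
`c` and vanishes at `0`. Scaling the coordinates of `(ρ, …, ρ)` one at a time shows that near `0`
every weight-`μ` function is a multiple of the monomial `∏ i, z i ^ max (μ i) 0`. Two multiples of
one function are linearly dependent near `0`, hence on the connected set `Ω`.
-/

open Filter Metric Topology Set

theorem AnalyticOnNhd.eqOn_of_eqOn_sphere {E : Type*} [NormedAddCommGroup E] [NormedSpace ℂ E]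
    {U : Set ℂ} {ψ φ : ℂ → E} (hψ : AnalyticOnNhd ℂ ψ U) (hφ : AnalyticOnNhd ℂ φ U)
    (hU : IsPreconnected U) {c : ℂ} {r : ℝ} (hr : 0 < r) (hsU : sphere c r ⊆ U)
    (h : EqOn ψ φ (sphere c r)) : EqOn ψ φ U := by
  have hc : c + r ∈ sphere c r := by simp [abs_of_pos hr]
  have hnontriv : (sphere c r).Nontrivial :=
    ⟨c + r, hc, c - r, by simp [abs_of_pos hr], by
      norm_num [sub_eq_add_neg, eq_neg_iff_add_eq_zero, hr.ne']⟩
  have hacc : ∃ᶠ w in 𝓝[≠] (c + r), w ∈ sphere c r :=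
    frequently_mem_iff_neBot.mpr <|
      (isPreconnected_sphere (by simp) c r).preperfect_of_nontrivial hnontriv _ hc
  exact hψ.eqOn_of_preconnected_of_frequently_eq hφ hU (hsU hc) (hacc.mono h)

theorem AnalyticOnNhd.eqOn_mul_pow_toNat_of_eq_mul_zpow {U : Set ℂ} {ψ : ℂ → ℂ}
    (hψ : AnalyticOnNhd ℂ ψ U) (hU : IsPreconnected U) (h0 : 0 ∈ U) (hsU : sphere 0 1 ⊆ U)
    {c : ℂ} {m : ℤ} (h : ∀ w ∈ sphere (0 : ℂ) 1, ψ w = c * w ^ m) :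
    EqOn ψ (fun w => c * w ^ m.toNat) U := by
  rcases le_or_gt 0 m with hm | hm
  · refine hψ.eqOn_of_eqOn_sphere (fun w _ => by fun_prop) hU one_pos hsU fun w hw => ?_
    rw [h w hw, ← zpow_natCast, Int.toNat_of_nonneg hm]
  · obtain ⟨l, rfl⟩ : ∃ l : ℕ, m = -l := ⟨(-m).toNat, by omega⟩
    have hl : l ≠ 0 := by omega
    have hmul : EqOn (fun w => w ^ l * ψ w) (fun _ => c) U := by
      refine AnalyticOnNhd.eqOn_of_eqOn_sphere (fun w hw => by have := hψ w hw; fun_prop)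
        analyticOnNhd_const hU one_pos hsU fun w hw => ?_
      have hw0 : w ≠ 0 := ne_zero_of_mem_sphere one_ne_zero ⟨w, hw⟩
      simp only [h w hw, zpow_neg, zpow_natCast]
      field_simp
    have hc : c = 0 := by simpa [hl] using (hmul h0).symm
    have hψ0 : EqOn ψ 0 U :=
      hψ.eqOn_of_eqOn_sphere analyticOnNhd_const hU one_pos hsU fun w hw => by simp [h w hw, hc]
    intro w hw
    simp [hψ0 hw, hc]

theorem analyticAt_mulSingle_mul {𝕜 ι : Type*} [NontriviallyNormedField 𝕜] [Fintype ι]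
    [DecidableEq ι] (i : ι) (z : ι → 𝕜) (w : 𝕜) :
    AnalyticAt 𝕜 (fun w => Pi.mulSingle i w * z) w := by
  refine AnalyticAt.pi fun j => ?_
  rcases eq_or_ne j i with rfl | hj
  · simp only [Pi.mul_apply, Pi.mulSingle_eq_same]
    fun_prop
  · simpa [hj] using analyticAt_const

theorem exists_ne_zero_mul_add_mul_eq_zero {R : Type*} [CommRing R] [Nontrivial R] (x y : R) :
    ∃ c₁ c₂ : R, (c₁, c₂) ≠ (0, 0) ∧ c₁ * x + c₂ * y = 0 := by
  by_cases hx : x = 0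
  · exact ⟨1, 0, by simp, by simp [hx]⟩
  · exact ⟨y, -x, by simp [hx], by ring⟩

section Weight

variable {ι : Type*} [Fintype ι]

def HasWeightOn (μ : ι → ℤ) (U : Set (ι → ℂ)) (F : (ι → ℂ) → ℂ) : Prop :=
  ∀ a : ι → ℂ, (∀ i, ‖a i‖ = 1) → ∀ z ∈ U, F (a * z) = (∏ i, a i ^ μ i) * F z

theorem mul_mem_ball_zero_of_norm_le_one {w z : ι → ℂ} {r : ℝ} (hw : ∀ i, ‖w i‖ ≤ 1)
    (hz : z ∈ ball 0 r) : w * z ∈ ball 0 r := by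
  rw [mem_ball_zero_iff] at hz ⊢
  calc ‖w * z‖ ≤ ‖w‖ * ‖z‖ := norm_mul_le w z
    _ ≤ 1 * ‖z‖ := by gcongr; exact (pi_norm_le_iff_of_nonneg zero_le_one).2 hw
    _ < r := by rwa [one_mul]

variable [DecidableEq ι] {μ : ι → ℤ} {r : ℝ} {F : (ι → ℂ) → ℂ}

theorem HasWeightOn.apply_mulSingle_mul (hF : AnalyticOnNhd ℂ F (ball 0 r))
    (hwF : HasWeightOn μ (ball 0 r) F) {z : ι → ℂ} (hz : z ∈ ball 0 r) {i : ι} (hzi : z i ≠ 0)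
    {t : ℂ} (ht : ‖t‖ ≤ 1) : F (Pi.mulSingle i t * z) = t ^ (μ i).toNat * F z := by
  have hzr : ‖z‖ < r := mem_ball_zero_iff.1 hz
  have hzi_pos : 0 < ‖z i‖ := norm_pos_iff.2 hzi
  have hR : 1 < r / ‖z i‖ := (one_lt_div hzi_pos).2 ((norm_le_pi_norm z i).trans_lt hzr)
  have hmem : ∀ w ∈ ball (0 : ℂ) (r / ‖z i‖), Pi.mulSingle i w * z ∈ ball 0 r := by
    intro w hw
    rw [mem_ball_zero_iff, pi_norm_lt_iff ((norm_nonneg _).trans_lt hzr)]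
    intro j
    rcases eq_or_ne j i with rfl | hj
    · rw [mem_ball_zero_iff, lt_div_iff₀ hzi_pos] at hw
      simpa using hw
    · simpa [hj] using (norm_le_pi_norm z j).trans_lt hzr
  have hψ : AnalyticOnNhd ℂ (fun w => F (Pi.mulSingle i w * z)) (ball 0 (r / ‖z i‖)) :=
    fun w hw => (hF _ (hmem w hw)).comp (f := fun w => Pi.mulSingle i w * z)
      (analyticAt_mulSingle_mul i z w)
  have hcirc : ∀ w ∈ sphere (0 : ℂ) 1, F (Pi.mulSingle i w * z) = F z * w ^ μ i := by
    intro w hw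
    have ha : ∀ j, ‖(Pi.mulSingle i w : ι → ℂ) j‖ = 1 := by
      intro j
      rcases eq_or_ne j i with rfl | hj
      · simpa using hw
      · simp [hj]
    rw [hwF _ ha z hz, Fintype.prod_eq_single i fun j hj => by simp [hj], Pi.mulSingle_eq_same,
      mul_comm]
  exact (hψ.eqOn_mul_pow_toNat_of_eq_mul_zpow (convex_ball _ _).isPreconnected
    (mem_ball_self (zero_lt_one.trans hR)) (sphere_subset_ball hR) hcirc
    (mem_ball_zero_iff.2 (ht.trans_lt hR))).trans (mul_comm _ _)

theorem HasWeightOn.apply_mul (hF : AnalyticOnNhd ℂ F (ball 0 r))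
    (hwF : HasWeightOn μ (ball 0 r) F) {z : ι → ℂ} (hz : z ∈ ball 0 r) (hz0 : ∀ i, z i ≠ 0)
    {w : ι → ℂ} (hw : ∀ i, ‖w i‖ ≤ 1) : F (w * z) = (∏ i, w i ^ (μ i).toNat) * F z := by
  suffices ∀ s : Finset ι, F (s.piecewise w 1 * z) = (∏ i ∈ s, w i ^ (μ i).toNat) * F z by
    simpa using this Finset.univ
  intro s
  induction s using Finset.induction_on with
  | empty => simp
  | insert i s hi ih =>
    have hsplit :
        (insert i s).piecewise w 1 * z = Pi.mulSingle i (w i) * (s.piecewise w 1 * z) := by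
      ext j
      rcases eq_or_ne j i with rfl | hj
      · simp [hi]
      · simp [hj, Finset.piecewise_insert_of_ne]
    have hmem : s.piecewise w 1 * z ∈ ball 0 r :=
      mul_mem_ball_zero_of_norm_le_one (fun j => by by_cases hj : j ∈ s <;> simp [hj, hw j]) hz
    rw [hsplit, hwF.apply_mulSingle_mul hF hmem (by simpa [hi] using hz0 i) (hw i), ih,
      Finset.prod_insert hi, mul_assoc]

theorem HasWeightOn.exists_eventuallyEq_monomial (hr : 0 < r) (hF : AnalyticOnNhd ℂ F (ball 0 r))
    (hwF : HasWeightOn μ (ball 0 r) F) :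
    ∃ c : ℂ, F =ᶠ[𝓝 0] fun z => c * ∏ i, z i ^ (μ i).toNat := by
  set ρ : ℂ := ((r / 2 : ℝ) : ℂ)
  have hρ : ‖ρ‖ = r / 2 := by simp [ρ, abs_of_pos hr]
  have hρ0 : ρ ≠ 0 := norm_pos_iff.1 (by rw [hρ]; positivity)
  have hζ : (fun _ => ρ : ι → ℂ) ∈ ball 0 r := by
    rw [mem_ball_zero_iff, pi_norm_lt_iff hr]
    intro
    rw [hρ]
    linarith
  refine ⟨F (fun _ => ρ) / ∏ i, ρ ^ (μ i).toNat, ?_⟩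
  filter_upwards [ball_mem_nhds (0 : ι → ℂ) (half_pos hr)] with z hz
  have hw : ∀ i, ‖z i / ρ‖ ≤ 1 := fun i => by
    rw [norm_div, hρ, div_le_one (half_pos hr)]
    exact (norm_le_pi_norm z i).trans (mem_ball_zero_iff.1 hz).le
  have hz_eq : ((fun i => z i / ρ) * fun _ => ρ) = z := funext fun i => div_mul_cancel₀ _ hρ0
  rw [← congrArg F hz_eq, hwF.apply_mul hF hζ (fun _ => hρ0) hw]
  simp only [div_pow, Finset.prod_div_distrib]
  ring

end Weight

theorem stmt_2_general (n : ℕ) (Ω : Set (Fin n → ℂ))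
    (h0 : (0 : Fin n → ℂ) ∈ Ω) (hopen : IsOpen Ω) (hconn : IsConnected Ω)
    (μ : Fin n → ℤ) (f g : (Fin n → ℂ) → ℂ)
    (hf : AnalyticOnNhd ℂ f Ω) (hg : AnalyticOnNhd ℂ g Ω)
    (heqf : ∀ a : Fin n → ℂ, (∀ i, ‖a i‖ = 1) → ∀ z ∈ Ω,
      f (fun i => a i * z i) = (∏ i, a i ^ μ i) * f z)
    (heqg : ∀ a : Fin n → ℂ, (∀ i, ‖a i‖ = 1) → ∀ z ∈ Ω,
      g (fun i => a i * z i) = (∏ i, a i ^ μ i) * g z) :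
    ∃ c₁ c₂ : ℂ, (c₁, c₂) ≠ (0, 0) ∧ ∀ z ∈ Ω, c₁ * f z + c₂ * g z = 0 := by
  obtain ⟨r, hr, hball⟩ := Metric.isOpen_iff.1 hopen 0 h0
  obtain ⟨a, ha⟩ := HasWeightOn.exists_eventuallyEq_monomial hr (hf.mono hball)
    fun a h z hz => heqf a h z (hball hz)
  obtain ⟨b, hb⟩ := HasWeightOn.exists_eventuallyEq_monomial hr (hg.mono hball)
    fun a h z hz => heqg a h z (hball hz)
  obtain ⟨c₁, c₂, hne, hc⟩ := exists_ne_zero_mul_add_mul_eq_zero a b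
  have hzero : (fun z => c₁ * f z + c₂ * g z) =ᶠ[𝓝 0] 0 := by
    filter_upwards [ha, hb] with z hfz hgz
    rw [hfz, hgz, Pi.zero_apply]
    linear_combination (∏ i, z i ^ (μ i).toNat) * hc
  have hcomb : AnalyticOnNhd ℂ (fun z => c₁ * f z + c₂ * g z) Ω :=
    (analyticOnNhd_const.mul hf).add (analyticOnNhd_const.mul hg)
  exact ⟨c₁, c₂, hne,
    hcomb.eqOn_zero_of_preconnected_of_eventuallyEq_zero hconn.isPreconnected h0 hzero⟩

/-- On a nonempty connected open torus-invariant set Ω ⊆ ℂⁿ containing the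
origin, two holomorphic functions of the same weight μ for the coordinatewise (S¹)ⁿ-action
are linearly dependent. -/
theorem stmt_2 (n : ℕ) (Ω : Set (Fin n → ℂ))
    (h0 : (0 : Fin n → ℂ) ∈ Ω) (hopen : IsOpen Ω) (hconn : IsConnected Ω)
    (hinv : ∀ a : Fin n → ℂ, (∀ i, ‖a i‖ = 1) → ∀ z ∈ Ω, (fun i => a i * z i) ∈ Ω)
    (μ : Fin n → ℤ) (f g : (Fin n → ℂ) → ℂ)
    (hf : AnalyticOnNhd ℂ f Ω) (hg : AnalyticOnNhd ℂ g Ω)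
    (heqf : ∀ a : Fin n → ℂ, (∀ i, ‖a i‖ = 1) → ∀ z ∈ Ω,
      f (fun i => a i * z i) = (∏ i, a i ^ μ i) * f z)
    (heqg : ∀ a : Fin n → ℂ, (∀ i, ‖a i‖ = 1) → ∀ z ∈ Ω,
      g (fun i => a i * z i) = (∏ i, a i ^ μ i) * g z) :
    ∃ c₁ c₂ : ℂ, (c₁, c₂) ≠ (0, 0) ∧ ∀ z ∈ Ω, c₁ * f z + c₂ * g z = 0 :=
  stmt_2_general n Ω h0 hopen hconn μ f g hf hg heqf heqg
end

section
/- Let A be a subset of {1, …, N} and let f be an entire function on ℂᴺ. If f vanishes on the coordinate subspace {z ∈ ℂᴺ : z_i = 0 for all i ∈ A}, then there exist entire functions g_i on ℂᴺ, indexed by i ∈ A, such that f(z) = Σ_{i ∈ A} z_i · g_i(z) for all z ∈ ℂᴺ. -/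
/-!
Let `ℓ` be a continuous linear functional with `ℓ e = 1` and `π = id - ℓ(·) e` the projection
onto `ker ℓ`. If `F = ∑ pₙ` near a point `x` of `ker ℓ` and `F` vanishes on `ker ℓ`, then
subtracting `F (x + πy) = 0` gives `F (x + y) = ∑ (pₙ (y, …, y) - pₙ (πy, …, πy))`, and replacing
one `y` by `πy` at a time shows that each difference is `ℓ y` times a multilinear map of norm
`O(n ‖pₙ‖)`. So locally `F = ℓ • Q` with `Q` analytic; off `ker ℓ` the quotient `F / ℓ` is
analytic anyway, and the local quotients glue to a global one. Splitting
`f = (f - f ∘ π) + f ∘ π` for the coordinate functional `z ↦ z a` and inducting on `A` gives the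
theorem.
-/

open Set Filter Topology
open scoped NNReal

noncomputable section

variable {𝕜 E G : Type*} [NontriviallyNormedField 𝕜] [NormedAddCommGroup E] [NormedSpace 𝕜 E]
  [NormedAddCommGroup G] [NormedSpace 𝕜 G]

lemma Fin.insertNth_fun_const {α : Type*} {m : ℕ} (j : Fin (m + 1)) (x v : α) :
    (j.insertNth x fun _ => v : Fin (m + 1) → α) = Function.update (fun _ => v) j x := by
  rw [← Fin.insertNth_removeNth, Fin.removeNth_fun_const]

namespace ContinuousLinearMap

def projKer (ℓ : E →L[𝕜] 𝕜) (e : E) : E →L[𝕜] E := .id 𝕜 E - ℓ.smulRight e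

variable (ℓ : E →L[𝕜] 𝕜) (e : E)

@[simp] lemma projKer_apply (v : E) : ℓ.projKer e v = v - ℓ v • e := rfl

lemma apply_projKer (hℓe : ℓ e = 1) (v : E) : ℓ (ℓ.projKer e v) = 0 := by simp [hℓe]

end ContinuousLinearMap

namespace ContinuousMultilinearMap

variable (ℓ : E →L[𝕜] 𝕜) (e : E) {m : ℕ}

/- Slots before `j` are projected to `ker ℓ` and slot `j` holds `e`: summed over `j`, these
terms telescope `f (v, …, v) - f (πv, …, πv)` after multiplication by `ℓ v`. -/
def hadamardTerm (f : ContinuousMultilinearMap 𝕜 (fun _ : Fin (m + 1) => E) G) (j : Fin (m + 1)) :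
    ContinuousMultilinearMap 𝕜 (fun _ : Fin m => E) G :=
  (f.compContinuousLinearMap fun s => if (s : ℕ) < j then ℓ.projKer e else .id 𝕜 E).curryMid j e

def hadamardQuotient (f : ContinuousMultilinearMap 𝕜 (fun _ : Fin (m + 1) => E) G) :
    ContinuousMultilinearMap 𝕜 (fun _ : Fin m => E) G :=
  ∑ j, hadamardTerm ℓ e f j

variable {ℓ e} in
lemma smul_hadamardTerm_apply_const (f : ContinuousMultilinearMap 𝕜 (fun _ : Fin (m + 1) => E) G)
    (j : Fin (m + 1)) (v : E) :
    ℓ v • hadamardTerm ℓ e f j (fun _ => v) =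
      f (fun s => if (s : ℕ) < j then ℓ.projKer e v else v) -
        f (fun s => if (s : ℕ) < j + 1 then ℓ.projKer e v else v) := by
  classical
  set w : Fin (m + 1) → E := fun s => if (s : ℕ) < j then ℓ.projKer e v else v
  have hslot : ∀ x : E, (fun s : Fin (m + 1) => (if (s : ℕ) < j then ℓ.projKer e else .id 𝕜 E)
      ((j.insertNth x fun _ => v : Fin (m + 1) → E) s)) = Function.update w j x := by
    intro x
    funext s
    rcases eq_or_ne s j with rfl | hs
    · simp
    · simp only [Fin.insertNth_fun_const, Function.update_of_ne hs, w]
      split_ifs <;> rfl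
  have hlt : ∀ s : Fin (m + 1), (s : ℕ) < j + 1 ↔ (s : ℕ) < j ∨ s = j := by
    intro s; rw [Fin.ext_iff]; omega
  have hw : (fun s : Fin (m + 1) => if (s : ℕ) < j + 1 then ℓ.projKer e v else v) =
      Function.update w j (ℓ.projKer e v) := by
    funext s
    rcases eq_or_ne s j with rfl | hs
    · simp
    · simp [hs, w, hlt]
  have hwj : Function.update w j v = w := Function.update_eq_self_iff.2 (by simp [w])
  have hdiff : v - ℓ.projKer e v = ℓ v • e := sub_sub_cancel v _
  rw [hw, hadamardTerm, curryMid_apply, compContinuousLinearMap_apply, hslot,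
    ← f.map_update_smul, ← hdiff, f.map_update_sub, hwj]

lemma smul_hadamardQuotient_apply_const
    (f : ContinuousMultilinearMap 𝕜 (fun _ : Fin (m + 1) => E) G) (v : E) :
    ℓ v • hadamardQuotient ℓ e f (fun _ => v) = f (fun _ => v) - f (fun _ => ℓ.projKer e v) := by
  set T : ℕ → G := fun k => f fun s : Fin (m + 1) => if (s : ℕ) < k then ℓ.projKer e v else v
  have hT0 : T 0 = f fun _ => v := by simp [T]
  have hT : T (m + 1) = f fun _ => ℓ.projKer e v := by simp [T, Fin.is_le]
  rw [hadamardQuotient, sum_apply, Finset.smul_sum]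
  simp_rw [smul_hadamardTerm_apply_const]
  rw [Fin.sum_univ_eq_sum_range (fun k => T k - T (k + 1)), Finset.sum_range_sub', hT0, hT]

lemma norm_hadamardQuotient_le (f : ContinuousMultilinearMap 𝕜 (fun _ : Fin (m + 1) => E) G) :
    ‖hadamardQuotient ℓ e f‖ ≤ (m + 1) * (‖e‖ * (‖ℓ.projKer e‖ + 1) ^ (m + 1) * ‖f‖) := by
  have hterm : ∀ j, ‖hadamardTerm ℓ e f j‖ ≤ ‖e‖ * (‖ℓ.projKer e‖ + 1) ^ (m + 1) * ‖f‖ := by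
    intro j
    set g := f.compContinuousLinearMap fun s : Fin (m + 1) =>
      if (s : ℕ) < j then ℓ.projKer e else .id 𝕜 E
    have hg : ‖g‖ ≤ ‖f‖ * (‖ℓ.projKer e‖ + 1) ^ (m + 1) := by
      refine (f.norm_compContinuousLinearMap_le _).trans
        (mul_le_mul_of_nonneg_left ?_ (norm_nonneg f))
      calc ∏ s : Fin (m + 1), ‖if (s : ℕ) < j then ℓ.projKer e else ContinuousLinearMap.id 𝕜 E‖
          ≤ ∏ _s : Fin (m + 1), (‖ℓ.projKer e‖ + 1) := by
            gcongr with s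
            split_ifs
            · linarith
            · exact ContinuousLinearMap.norm_id_le.trans (by linarith [norm_nonneg (ℓ.projKer e)])
        _ = (‖ℓ.projKer e‖ + 1) ^ (m + 1) := by simp
    calc ‖hadamardTerm ℓ e f j‖ ≤ ‖g.curryMid j‖ * ‖e‖ := (g.curryMid j).le_opNorm e
      _ = ‖g‖ * ‖e‖ := by rw [norm_curryMid]
      _ ≤ ‖e‖ * (‖ℓ.projKer e‖ + 1) ^ (m + 1) * ‖f‖ := by nlinarith [norm_nonneg e]
  calc ‖hadamardQuotient ℓ e f‖ ≤ ∑ j, ‖hadamardTerm ℓ e f j‖ := norm_sum_le _ _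
    _ ≤ ∑ _j : Fin (m + 1), ‖e‖ * (‖ℓ.projKer e‖ + 1) ^ (m + 1) * ‖f‖ :=
      Finset.sum_le_sum fun j _ => hterm j
    _ = _ := by simp

end ContinuousMultilinearMap

namespace FormalMultilinearSeries

theorem radius_pos_of_norm_le_mul_succ {p q : FormalMultilinearSeries 𝕜 E G} (hp : 0 < p.radius)
    {A : ℝ} {K : ℝ≥0} (hA : 0 ≤ A) (hK : 0 < K)
    (h : ∀ m, ‖q m‖ ≤ A * ((m + 1) * K ^ m * ‖p (m + 1)‖)) : 0 < q.radius := by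
  obtain ⟨r, hr0, hr⟩ := ENNReal.lt_iff_exists_nnreal_btwn.1 hp
  obtain ⟨C, -, hC⟩ := p.norm_mul_pow_le_of_lt_radius hr
  have hr0' : (0 : ℝ) < r := by exact_mod_cast ENNReal.coe_pos.1 hr0
  refine lt_of_lt_of_le ?_ (q.le_radius_of_bound (A * C / r) (r := r / (2 * K)) fun m => ?_)
  · simp [ENNReal.coe_pos.1 hr0, hK]
  have hm : ((m : ℝ) + 1) / 2 ^ m ≤ 1 := by
    rw [div_le_one (by positivity)]
    exact_mod_cast Nat.lt_two_pow_self
  push_cast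
  calc ‖q m‖ * ((r : ℝ) / (2 * K)) ^ m
      ≤ A * ((m + 1) * K ^ m * ‖p (m + 1)‖) * ((r : ℝ) / (2 * K)) ^ m := by gcongr; exact h m
    _ = A * (((m : ℝ) + 1) / 2 ^ m) * (‖p (m + 1)‖ * (r : ℝ) ^ (m + 1)) / r := by
      rw [div_pow, mul_pow, pow_succ]
      field_simp
    _ ≤ A * 1 * C / r := by gcongr; exact hC (m + 1)
    _ = A * C / r := by ring

def hadamardQuotient (ℓ : E →L[𝕜] 𝕜) (e : E) (p : FormalMultilinearSeries 𝕜 E G) :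
    FormalMultilinearSeries 𝕜 E G :=
  fun m => (p (m + 1)).hadamardQuotient ℓ e

theorem radius_hadamardQuotient_pos (ℓ : E →L[𝕜] 𝕜) (e : E) {p : FormalMultilinearSeries 𝕜 E G}
    (hp : 0 < p.radius) : 0 < (p.hadamardQuotient ℓ e).radius := by
  refine radius_pos_of_norm_le_mul_succ hp (A := ‖e‖ * (‖ℓ.projKer e‖ + 1))
    (K := ‖ℓ.projKer e‖₊ + 1) (by positivity) (by positivity) fun m => ?_
  refine ((p (m + 1)).norm_hadamardQuotient_le ℓ e).trans (le_of_eq ?_)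
  push_cast
  ring

end FormalMultilinearSeries

theorem AnalyticAt.exists_analyticAt_eventually_eq_smul [CompleteSpace G] {F : E → G} {x : E}
    (ℓ : E →L[𝕜] 𝕜) (e : E) (hF : AnalyticAt 𝕜 F x) (hℓe : ℓ e = 1) (hx : ℓ x = 0)
    (hvan : ∀ᶠ z in 𝓝 x, ℓ z = 0 → F z = 0) :
    ∃ Q : E → G, AnalyticAt 𝕜 Q x ∧ ∀ᶠ z in 𝓝 x, F z = ℓ z • Q z := by
  obtain ⟨p, hp⟩ := hF
  set q := p.hadamardQuotient ℓ e
  have hq : HasFPowerSeriesOnBall q.sum q 0 q.radius :=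
    q.hasFPowerSeriesOnBall (FormalMultilinearSeries.radius_hadamardQuotient_pos ℓ e hp.radius_pos)
  refine ⟨fun z => q.sum (z - x), by simpa using (hq.comp_sub x).analyticAt, ?_⟩
  rw [← map_add_left_nhds_zero x, eventually_map]
  have hπ : Tendsto (ℓ.projKer e) (𝓝 0) (𝓝 0) := by simpa using (ℓ.projKer e).continuous.tendsto 0
  have hxπ : Tendsto (fun y => x + ℓ.projKer e y) (𝓝 0) (𝓝 x) := by
    simpa using tendsto_const_nhds.add hπ
  filter_upwards [hp.eventually_hasSum, hπ.eventually hp.eventually_hasSum, hxπ.eventually hvan,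
    hq.hasFPowerSeriesAt.eventually_hasSum] with y hFy hFπy hvany hqy
  have hπy : F (x + ℓ.projKer e y) = 0 :=
    hvany (by rw [map_add, hx, ℓ.apply_projKer e hℓe, zero_add])
  have hp0 : (p 0 fun _ => y) = p 0 fun _ => ℓ.projKer e y := congrArg _ (Subsingleton.elim _ _)
  have hshift : HasSum (fun m => (p (m + 1) fun _ => y) - p (m + 1) fun _ => ℓ.projKer e y)
      (F (x + y)) := by
    have hdiff := hFy.sub hFπy
    rw [hπy, sub_zero, ← hasSum_nat_add_iff' 1] at hdiff
    simpa [hp0] using hdiff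
  have hquot := hqy.const_smul (ℓ y)
  rw [zero_add] at hquot
  rw [map_add, hx, zero_add, add_sub_cancel_left]
  refine hshift.unique ?_
  convert hquot using 1
  funext m
  exact (ContinuousMultilinearMap.smul_hadamardQuotient_apply_const ℓ e (p (m + 1)) y).symm

/- On `ker ℓ` the quotient `F / ℓ` is given the value it takes in the limit, the derivative of `F`
along `e` (for `ℓ e = 1`). -/
open Classical in
def divByFunctional (ℓ : E →L[𝕜] 𝕜) (e : E) (F : E → G) (z : E) : G :=
  if ℓ z = 0 then fderiv 𝕜 F z e else (ℓ z)⁻¹ • F z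

section divByFunctional

variable {ℓ : E →L[𝕜] 𝕜} {e : E} {F : E → G}

theorem eq_smul_divByFunctional {z : E} (hvan : ℓ z = 0 → F z = 0) :
    F z = ℓ z • divByFunctional ℓ e F z := by
  by_cases hz : ℓ z = 0
  · simp [hz, hvan hz]
  · simp [divByFunctional, hz]

theorem divByFunctional_eq_of_eventuallyEq_smul (hℓe : ℓ e = 1) {Q : E → G} {z : E}
    (hFQ : F =ᶠ[𝓝 z] fun w => ℓ w • Q w) (hQ : DifferentiableAt 𝕜 Q z) :
    divByFunctional ℓ e F z = Q z := by
  by_cases hz : ℓ z = 0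
  · have hd : HasFDerivAt (fun w => ℓ w • Q w) (ℓ z • fderiv 𝕜 Q z + ℓ.smulRight (Q z)) z :=
      ℓ.hasFDerivAt.smul hQ.hasFDerivAt
    rw [divByFunctional, if_pos hz, hFQ.fderiv_eq, hd.fderiv]
    simp [hz, hℓe]
  · rw [divByFunctional, if_neg hz, hFQ.eq_of_nhds, inv_smul_smul₀ hz]

theorem AnalyticOnNhd.divByFunctional [CompleteSpace G] {U : Set E} (hF : AnalyticOnNhd 𝕜 F U)
    (hU : IsOpen U) (hℓe : ℓ e = 1) (hvan : ∀ z ∈ U, ℓ z = 0 → F z = 0) :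
    AnalyticOnNhd 𝕜 (divByFunctional ℓ e F) U := by
  intro x hxU
  by_cases hx : ℓ x = 0
  · obtain ⟨Q, hQ, hFQ⟩ := (hF x hxU).exists_analyticAt_eventually_eq_smul ℓ e hℓe hx
      (by filter_upwards [hU.mem_nhds hxU] with z hz using hvan z hz)
    refine hQ.congr ?_
    filter_upwards [hFQ.eventually_nhds, hQ.eventually_analyticAt] with z hFQz hQz
    exact (divByFunctional_eq_of_eventuallyEq_smul hℓe hFQz hQz.differentiableAt).symm
  · refine (((ℓ.analyticAt x).inv hx).smul (hF x hxU)).congr ?_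
    filter_upwards [ℓ.continuous.continuousAt.eventually_ne hx] with z hz
    simp [_root_.divByFunctional, hz]

end divByFunctional

lemma ContinuousLinearMap.projKer_proj_single_apply {ι : Type*} [Fintype ι] [DecidableEq ι]
    (a : ι) (z : ι → 𝕜) :
    (ContinuousLinearMap.proj a : (ι → 𝕜) →L[𝕜] 𝕜).projKer (Pi.single a 1) z =
      Function.update z a 0 := by
  funext j
  rcases eq_or_ne j a with rfl | hj
  · simp
  · simp [hj]

theorem exists_eq_sum_smul_of_eq_zero {ι : Type*} [Fintype ι] [DecidableEq ι] [CompleteSpace G]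
    (A : Finset ι) (f : (ι → 𝕜) → G) (hf : AnalyticOnNhd 𝕜 f univ)
    (hvan : ∀ z, (∀ i ∈ A, z i = 0) → f z = 0) :
    ∃ g : ι → (ι → 𝕜) → G, (∀ i ∈ A, AnalyticOnNhd 𝕜 (g i) univ) ∧
      ∀ z, f z = ∑ i ∈ A, z i • g i z := by
  induction A using Finset.induction_on generalizing f with
  | empty => exact ⟨0, by simp, fun z => by simp [hvan z (by simp)]⟩
  | insert a s ha ih =>
    set ℓ : (ι → 𝕜) →L[𝕜] 𝕜 := ContinuousLinearMap.proj a
    set π := ℓ.projKer (Pi.single a 1)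
    have hπ : ∀ z, π z = Function.update z a 0 := ContinuousLinearMap.projKer_proj_single_apply a
    have hfπ : AnalyticOnNhd 𝕜 (f ∘ π) univ := hf.comp (π.analyticOnNhd univ) (mapsTo_univ _ _)
    obtain ⟨g, hg, hfg⟩ := ih (f ∘ π) hfπ fun z hz => hvan _ fun i hi => by
      rcases eq_or_ne i a with rfl | hia
      · simp [hπ]
      · simp [hπ, hia, hz i (Finset.mem_of_mem_insert_of_ne hi hia)]
    set f₀ : (ι → 𝕜) → G := fun z => f z - f (π z)
    have hf₀ : AnalyticOnNhd 𝕜 f₀ univ := hf.sub hfπ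
    have hf₀van : ∀ z ∈ univ, ℓ z = 0 → f₀ z = 0 := fun z _ hz => by
      rw [sub_eq_zero, hπ, Function.update_eq_self_iff.2 hz.symm]
    refine ⟨Function.update g a (divByFunctional ℓ (Pi.single a 1) f₀), fun i hi => ?_, fun z => ?_⟩
    · rcases eq_or_ne i a with rfl | hia
      · simpa using hf₀.divByFunctional isOpen_univ (by simp [ℓ]) hf₀van
      · simpa [hia] using hg i (Finset.mem_of_mem_insert_of_ne hi hia)
    · rw [Finset.sum_insert ha, Function.update_self, Finset.sum_congr rfl fun i hi => by
        rw [Function.update_of_ne (ne_of_mem_of_not_mem hi ha)], ← hfg z]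
      have hf₀z := eq_smul_divByFunctional (e := Pi.single a 1) (hf₀van z (mem_univ z))
      simp only [f₀, ℓ, ContinuousLinearMap.proj_apply] at hf₀z
      rw [← hf₀z, Function.comp_apply, sub_add_cancel]

/-- "holomorphic Hadamard lemma" for entire functions: if an entire function
on ℂᴺ vanishes on the coordinate subspace {z : z_i = 0 for all i ∈ A}, then it can be
written as Σ_{i ∈ A} z_i g_i with g_i entire. -/
theorem stmt_4 (N : ℕ) (A : Finset (Fin N)) (f : (Fin N → ℂ) → ℂ)
    (hf : AnalyticOnNhd ℂ f Set.univ)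
    (hvan : ∀ z : Fin N → ℂ, (∀ i ∈ A, z i = 0) → f z = 0) :
    ∃ g : Fin N → ((Fin N → ℂ) → ℂ),
      (∀ i ∈ A, AnalyticOnNhd ℂ (g i) Set.univ) ∧
      ∀ z : Fin N → ℂ, f z = ∑ i ∈ A, z i * g i z :=
  exists_eq_sum_smul_of_eq_zero A f hf hvan
end
end

section
/- Let A be a subset of {1, …, N} with |A| ≥ 1, and let k be an integer with 1 ≤ k ≤ |A|. Suppose given entire functions s_{j,B'} on ℂᴺ, indexed by j ∈ A and (k−1)-element subsets B' of A∖{j}, such that Σ_{B ∈ (A choose k)} (Π_{ℓ ∈ B} z_ℓ) · (Σ_{j ∈ B} s_{j, B∖{j}}(z)) = 0 for all z ∈ ℂᴺ. Then there exist entire functions s'_{i,B} on ℂᴺ, indexed by i ∈ A and k-element subsets B of A∖{i}, such that for every k-element subset B of A and every z ∈ ℂᴺ, Σ_{j ∈ B} s_{j, B∖{j}}(z) = Σ_{i ∈ A∖B} z_i · s'_{i,B}(z). -/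
/-!
On the coordinate subspace `{z | ∀ l ∈ A \ B, z l = 0}` every term of the relation except the
`B`-term has a vanishing factor `z l`, so `(∏ l ∈ B, z l) * f_B z = 0` there, where
`f_B = ∑ j ∈ B, s j (B.erase j)`; as `∏ l ∈ B, z l ≠ 0` on a dense set, `f_B` vanishes on that
subspace. An entire function vanishing on `{z | ∀ l ∈ T, z l = 0}` is a combination
`∑ l ∈ T, z l * g l z` with entire `g l`: split off one coordinate at a time using
`F z - F (update z a 0) = z a * H z`. The quotient `H` is analytic because near a point of the
hyperplane `z a = 0` it is the sum of the power series of `F` divided by `z a` term by term,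
each homogeneous part being divided by telescoping, which does not decrease the radius.
-/

open Function Set Filter Topology
open scoped NNReal ENNReal

theorem FormalMultilinearSeries.radius_le_radius_of_norm_le_succ_mul {𝕜 E F : Type*}
    [NontriviallyNormedField 𝕜] [NormedAddCommGroup E] [NormedSpace 𝕜 E] [NormedAddCommGroup F]
    [NormedSpace 𝕜 F] {p q : FormalMultilinearSeries 𝕜 E F}
    (h : ∀ n, ‖q n‖ ≤ (n + 1) * ‖p (n + 1)‖) : p.radius ≤ q.radius := by
  refine ENNReal.le_of_forall_nnreal_lt fun r hr => ?_
  rcases eq_or_ne r 0 with rfl | hr0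
  · simp
  obtain ⟨a, ha, C, hC0, hC⟩ := p.norm_mul_pow_le_mul_pow_of_lt_radius hr
  have hr0' : (0 : ℝ) < r := by positivity
  have hgeom : Summable fun n : ℕ => C * a / r * (((n : ℝ) + 1) * a ^ n) := by
    refine Summable.mul_left _ ?_
    simp_rw [add_mul, one_mul]
    have ha' : ‖a‖ < 1 := by rw [Real.norm_of_nonneg ha.1.le]; exact ha.2
    simpa using (summable_pow_mul_geometric_of_norm_lt_one 1 ha').add
      (summable_geometric_of_lt_one ha.1.le ha.2)
  refine q.le_radius_of_summable_norm (hgeom.of_nonneg_of_le (fun n => by positivity) fun n => ?_)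
  calc ‖q n‖ * (r : ℝ) ^ n ≤ (n + 1) * ‖p (n + 1)‖ * (r : ℝ) ^ n := by gcongr; exact h n
    _ = (n + 1) / r * (‖p (n + 1)‖ * (r : ℝ) ^ (n + 1)) := by field_simp; ring
    _ ≤ (n + 1) / r * (C * a ^ (n + 1)) := mul_le_mul_of_nonneg_left (hC _) (by positivity)
    _ = C * a / r * (((n : ℝ) + 1) * a ^ n) := by ring

theorem Fin.insertNth_ite_castSucc_lt {α : Type*} {m : ℕ} (t : Fin (m + 1)) (a b w : α) :
    t.insertNth w (fun j => if j.castSucc < t then a else b)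
      = fun s => if s < t then a else if s = t then w else b := by
  ext s
  refine Fin.succAboveCases t ?_ (fun j => ?_) s
  · simp
  · simp [Fin.succAbove_lt_iff_castSucc_lt, Fin.succAbove_ne]

theorem Finset.sum_powersetCard_prod_mul_eq {ι R : Type*} [DecidableEq ι] [CommSemiring R]
    {A B : Finset ι} {k : ℕ} (hB : B ∈ A.powersetCard k) {z : ι → R}
    (hz : ∀ l ∈ A \ B, z l = 0) (φ : Finset ι → R) :
    ∑ C ∈ A.powersetCard k, (∏ l ∈ C, z l) * φ C = (∏ l ∈ B, z l) * φ B := by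
  refine Finset.sum_eq_single_of_mem B hB fun C hC hCB => ?_
  obtain ⟨hCA, hCk⟩ := Finset.mem_powersetCard.1 hC
  obtain ⟨l, hlC, hlB⟩ := Finset.not_subset.1 fun hCB' => hCB <|
    Finset.eq_of_subset_of_card_le hCB' (by rw [hCk, (Finset.mem_powersetCard.1 hB).2])
  rw [Finset.prod_eq_zero hlC (hz l (Finset.mem_sdiff.2 ⟨hCA hlC, hlB⟩)), zero_mul]

theorem apply_eq_zero_of_prod_mul_eq_zero {𝕜 ι : Type*} [NontriviallyNormedField 𝕜]
    [DecidableEq ι] {B T : Finset ι} (hBT : Disjoint B T) {g : (ι → 𝕜) → 𝕜} (hg : Continuous g)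
    (h : ∀ z, (∀ l ∈ T, z l = 0) → (∏ l ∈ B, z l) * g z = 0) {z : ι → 𝕜}
    (hz : ∀ l ∈ T, z l = 0) : g z = 0 := by
  have hφ : Continuous fun w : ι → 𝕜 => T.piecewise (0 : ι → 𝕜) w := continuous_pi fun l => by
    by_cases hl : l ∈ T <;> simp [hl, continuous_apply, continuous_const]
  have hG : (fun w => g (T.piecewise (0 : ι → 𝕜) w)) = 0 := by
    refine (hg.comp hφ).ext_on (dense_pi (B : Set ι) fun _ _ => dense_compl_singleton 0)
      continuous_const fun w hw => ?_
    have hprod : ∏ l ∈ B, T.piecewise (0 : ι → 𝕜) w l = ∏ l ∈ B, w l :=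
      Finset.prod_congr rfl fun l hl => T.piecewise_eq_of_notMem _ _ (Finset.disjoint_left.1 hBT hl)
    have := h (T.piecewise (0 : ι → 𝕜) w) fun l hl => by simp [hl]
    rw [hprod] at this
    exact (mul_eq_zero.1 this).resolve_left (Finset.prod_ne_zero_iff.2 hw)
  have hz' : T.piecewise (0 : ι → 𝕜) z = z := by
    ext l; by_cases hl : l ∈ T <;> simp [hl, hz]
  simpa [hz'] using congrFun hG z

namespace CoordDivision

variable {𝕜 : Type*} [NontriviallyNormedField 𝕜] {ι : Type*} [DecidableEq ι]

def clearCoord (i : ι) : (ι → 𝕜) →L[𝕜] (ι → 𝕜) :=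
  ContinuousLinearMap.pi fun j => if j = i then 0 else ContinuousLinearMap.proj j

@[simp]
theorem clearCoord_apply (i : ι) (z : ι → 𝕜) : clearCoord i z = update z i 0 := by
  ext j; by_cases h : j = i <;> simp [clearCoord, h]

theorem sub_update_zero (y : ι → 𝕜) (i : ι) : y - update y i 0 = y i • Pi.single i 1 := by
  ext j; rcases eq_or_ne j i with rfl | h <;> simp [*]

/-- `F z / z i`, extended across the hyperplane `z i = 0` by the `i`-th partial derivative. -/
noncomputable def coordQuotient (i : ι) (F : (ι → 𝕜) → 𝕜) (z : ι → 𝕜) : 𝕜 :=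
  dslope (fun w => F (update z i w)) 0 (z i)

theorem coord_mul_coordQuotient (i : ι) (F : (ι → 𝕜) → 𝕜) (z : ι → 𝕜) :
    z i * coordQuotient i F z = F z - F (update z i 0) := by
  simpa [coordQuotient] using sub_smul_dslope (fun w => F (update z i w)) 0 (z i)

variable [Fintype ι]

theorem norm_update_zero_le (z : ι → 𝕜) (i : ι) : ‖update z i 0‖ ≤ ‖z‖ := by
  refine (pi_norm_le_iff_of_nonneg (norm_nonneg z)).2 fun j => ?_
  rcases eq_or_ne j i with rfl | h
  · simp
  · simpa [update_of_ne h] using norm_le_pi_norm z j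

theorem norm_clearCoord_le (i : ι) : ‖clearCoord (𝕜 := 𝕜) i‖ ≤ 1 :=
  ContinuousLinearMap.opNorm_le_bound _ zero_le_one fun z => by
    simpa using norm_update_zero_le z i

-- Telescope from `fun _ => y` to `fun _ => update y i 0` one slot `t` at a time: the slot being
-- changed contributes `y - update y i 0 = y i • Pi.single i 1`.
noncomputable def divSeries (i : ι) (p : FormalMultilinearSeries 𝕜 (ι → 𝕜) 𝕜) :
    FormalMultilinearSeries 𝕜 (ι → 𝕜) 𝕜 := fun m =>
  ∑ t : Fin (m + 1), ((p (m + 1)).curryMid t (Pi.single i 1)).compContinuousLinearMap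
    fun j => if j.castSucc < t then ContinuousLinearMap.id 𝕜 _ else clearCoord i

theorem norm_divSeries_le (i : ι) (p : FormalMultilinearSeries 𝕜 (ι → 𝕜) 𝕜) (m : ℕ) :
    ‖divSeries i p m‖ ≤ (m + 1) * ‖p (m + 1)‖ := by
  refine (norm_sum_le _ _).trans ((Finset.sum_le_sum (g := fun _ => ‖p (m + 1)‖)
    fun t _ => ?_).trans_eq (by simp))
  have hg : ∏ j : Fin m, ‖if j.castSucc < t then ContinuousLinearMap.id 𝕜 (ι → 𝕜)
      else clearCoord i‖ ≤ 1 := by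
    refine Finset.prod_le_one (fun _ _ => norm_nonneg _) fun j _ => ?_
    split_ifs
    · exact ContinuousLinearMap.norm_id_le
    · exact norm_clearCoord_le i
  calc _ ≤ ‖(p (m + 1)).curryMid t (Pi.single i 1)‖ * 1 :=
        (ContinuousMultilinearMap.norm_compContinuousLinearMap_le _ _).trans (by gcongr)
    _ ≤ ‖(p (m + 1)).curryMid t‖ * ‖(Pi.single i 1 : ι → 𝕜)‖ := by
        rw [mul_one]; exact ContinuousLinearMap.le_opNorm _ _
    _ = ‖p (m + 1)‖ := by simp [Pi.norm_single]

theorem radius_le_radius_divSeries (i : ι) (p : FormalMultilinearSeries 𝕜 (ι → 𝕜) 𝕜) :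
    p.radius ≤ (divSeries i p).radius :=
  FormalMultilinearSeries.radius_le_radius_of_norm_le_succ_mul (norm_divSeries_le i p)

theorem coord_mul_divSeries_apply (i : ι) (p : FormalMultilinearSeries 𝕜 (ι → 𝕜) 𝕜) (m : ℕ)
    (y : ι → 𝕜) :
    y i * divSeries i p m (fun _ => y)
      = p (m + 1) (fun _ => y) - p (m + 1) (fun _ => update y i 0) := by
  have := (p (m + 1)).map_piecewise_sub_map_piecewise (fun _ => y) (fun _ => update y i 0)
    (fun _ => y) Finset.univ
  simp only [Finset.piecewise_univ, Finset.mem_univ, if_true, sub_update_zero,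
    ContinuousMultilinearMap.coe_coe] at this
  rw [this, divSeries, sum_apply, Finset.mul_sum]
  refine Finset.sum_congr rfl fun t _ => ?_
  simp only [ContinuousMultilinearMap.compContinuousLinearMap_apply,
    ContinuousMultilinearMap.curryMid_apply, apply_ite (fun g : (ι → 𝕜) →L[𝕜] (ι → 𝕜) => g y),
    ContinuousLinearMap.id_apply, clearCoord_apply]
  rw [← Fin.insertNth_ite_castSucc_lt]
  exact ((p (m + 1)).toMultilinearMap.map_insertNth_smul t _ _ _).symm

variable {i : ι} {F : (ι → 𝕜) → 𝕜}

theorem coordQuotient_eqOn {U : Set (ι → 𝕜)} {S : (ι → 𝕜) → 𝕜} (hU : IsOpen U)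
    (hS : AnalyticOnNhd 𝕜 S U) (hFS : EqOn F (fun z => z i * S z) U)
    (hF0 : ∀ z, z i = 0 → F z = 0) : EqOn (coordQuotient i F) S U := by
  intro z hz
  rcases eq_or_ne (z i) 0 with hzi | hzi
  · have hz0 : update z i 0 = z := by rw [← hzi, update_eq_self]
    have hev : (fun w => F (update z i w)) =ᶠ[𝓝 0] fun w => w * S (update z i w) := by
      have := (hasFDerivAt_update (𝕜 := 𝕜) z (0 : 𝕜)).continuousAt.preimage_mem_nhds
        (hz0 ▸ hU.mem_nhds hz)
      filter_upwards [this] with w hw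
      simpa using hFS hw
    have hs : DifferentiableAt 𝕜 (fun w => S (update z i w)) 0 :=
      (hz0 ▸ (hS z hz).differentiableAt).comp 0 (hasFDerivAt_update z 0).differentiableAt
    have hderiv := ((hasDerivAt_id (0 : 𝕜)).mul hs.hasDerivAt).congr_of_eventuallyEq hev
    rw [coordQuotient, hzi, dslope_same, hderiv.deriv]
    simp [hz0]
  · have := coord_mul_coordQuotient i F z
    rw [hF0 (update z i 0) (by simp), sub_zero, hFS hz] at this
    exact mul_left_cancel₀ hzi this

variable [CompleteSpace 𝕜]

theorem coord_mul_sum_divSeries {p : FormalMultilinearSeries 𝕜 (ι → 𝕜) 𝕜}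
    {c : ι → 𝕜} {r : ℝ≥0∞} (hF : HasFPowerSeriesOnBall F p c r) (hc : c i = 0)
    (hF0 : ∀ z, z i = 0 → F z = 0) {y : ι → 𝕜} (hy : y ∈ Metric.eball 0 r) :
    y i * (divSeries i p).sum y = F (c + y) := by
  have hy' : update y i 0 ∈ Metric.eball 0 r := by
    simp only [Metric.mem_eball, edist_zero_right] at hy ⊢
    refine lt_of_le_of_lt ?_ hy
    simpa [enorm_eq_nnnorm, ← NNReal.coe_le_coe] using norm_update_zero_le y i
  have hdiff := (hF.hasSum hy).sub (hF.hasSum hy')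
  rw [hF0 (c + update y i 0) (by simp [hc]), sub_zero] at hdiff
  have hshift : HasSum (fun n => p (n + 1) (fun _ => y) - p (n + 1) (fun _ => update y i 0))
      (F (c + y)) := by
    simpa [Subsingleton.elim (fun _ : Fin 0 => y) (fun _ => update y i 0)] using
      (hasSum_nat_add_iff' 1).2 hdiff
  have hq := ((divSeries i p).hasSum
    (Metric.eball_subset_eball (hF.r_le.trans (radius_le_radius_divSeries i p)) hy)).mul_left (y i)
  simp_rw [coord_mul_divSeries_apply] at hq
  exact hq.unique hshift

theorem exists_eqOn_coord_mul_of_coord_eq_zero {c : ι → 𝕜} (hF : AnalyticAt 𝕜 F c) (hc : c i = 0)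
    (hF0 : ∀ z, z i = 0 → F z = 0) :
    ∃ U, IsOpen U ∧ c ∈ U ∧ ∃ S, AnalyticOnNhd 𝕜 S U ∧ EqOn F (fun z => z i * S z) U := by
  obtain ⟨p, r, hp⟩ := hF
  have hS : HasFPowerSeriesOnBall (fun z => (divSeries i p).sum (z - c)) (divSeries i p) c r := by
    have := ((divSeries i p).hasFPowerSeriesOnBall
      (hp.r_pos.trans_le (hp.r_le.trans (radius_le_radius_divSeries i p)))).comp_sub c
    simpa using this.mono hp.r_pos (hp.r_le.trans (radius_le_radius_divSeries i p))
  refine ⟨Metric.eball c r, Metric.isOpen_eball, Metric.mem_eball_self hp.r_pos, _,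
    hS.analyticOnNhd, fun z hz => ?_⟩
  have hz' : z - c ∈ Metric.eball 0 r := by simpa [edist_eq_enorm_sub] using hz
  simpa [hc] using (coord_mul_sum_divSeries hp hc hF0 hz').symm

theorem exists_analyticOnNhd_eq_coord_mul (hF : AnalyticOnNhd 𝕜 F univ)
    (hF0 : ∀ z, z i = 0 → F z = 0) :
    ∃ H, AnalyticOnNhd 𝕜 H univ ∧ ∀ z, F z = z i * H z := by
  refine ⟨coordQuotient i F, fun c _ => ?_, fun z => ?_⟩
  · obtain ⟨U, hU, hcU, S, hS, hFS⟩ : ∃ U, IsOpen U ∧ c ∈ U ∧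
        ∃ S, AnalyticOnNhd 𝕜 S U ∧ EqOn F (fun z => z i * S z) U := by
      rcases eq_or_ne (c i) 0 with hc | hc
      · exact exists_eqOn_coord_mul_of_coord_eq_zero (hF c trivial) hc hF0
      · refine ⟨{z | z i ≠ 0}, isOpen_ne_fun (continuous_apply i) continuous_const, hc,
          fun z => F z / z i, fun z hz => ?_, fun z hz => (mul_div_cancel₀ _ hz).symm⟩
        exact (hF z trivial).div
          ((ContinuousLinearMap.proj (R := 𝕜) (φ := fun _ : ι => 𝕜) i).analyticAt z) hz
    exact (hS c hcU).congr
      (eventuallyEq_of_mem (hU.mem_nhds hcU) (coordQuotient_eqOn hU hS hFS hF0).symm)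
  · rw [coord_mul_coordQuotient, hF0 (update z i 0) (by simp), sub_zero]

theorem exists_eq_sum_coord_mul (T : Finset ι) (hF : AnalyticOnNhd 𝕜 F univ)
    (hF0 : ∀ z, (∀ l ∈ T, z l = 0) → F z = 0) :
    ∃ g : ι → (ι → 𝕜) → 𝕜, (∀ l, AnalyticOnNhd 𝕜 (g l) univ) ∧
      ∀ z, F z = ∑ l ∈ T, z l * g l z := by
  induction T using Finset.induction_on generalizing F with
  | empty => exact ⟨0, fun _ => analyticOnNhd_const, fun z => by simpa using hF0 z⟩
  | insert a T ha ih =>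
    have hFa : AnalyticOnNhd 𝕜 (fun z => F (update z a 0)) univ := fun z _ => by
      simpa [Function.comp_def] using (hF _ trivial).comp ((clearCoord a).analyticAt z)
    obtain ⟨h, hh, hFh⟩ := exists_analyticOnNhd_eq_coord_mul (i := a)
      (F := fun z => F z - F (update z a 0)) (fun z _ => (hF z trivial).sub (hFa z trivial))
      fun z hz => by simp [← hz]
    obtain ⟨g, hg, hFg⟩ := ih hFa fun z hz => hF0 _ fun l hl => by
      rcases Finset.mem_insert.1 hl with rfl | hl
      · simp
      · rw [update_of_ne (ne_of_mem_of_not_mem hl ha)]; exact hz l hl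
    refine ⟨update g a h, fun l => ?_, fun z => ?_⟩
    · rcases eq_or_ne l a with rfl | hl
      · simpa using hh
      · simpa [hl] using hg l
    · have hT : ∑ l ∈ T, z l * update g a h l z = ∑ l ∈ T, z l * g l z :=
        Finset.sum_congr rfl fun l hl => by rw [update_of_ne (ne_of_mem_of_not_mem hl ha)]
      rw [Finset.sum_insert ha, update_self, hT, ← hFg, ← hFh]
      ring

end CoordDivision

theorem stmt_5_general (N : ℕ) (A : Finset (Fin N)) (k : ℕ)
    (s : Fin N → Finset (Fin N) → ((Fin N → ℂ) → ℂ))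
    (hs : ∀ j ∈ A, ∀ B' ∈ (A.erase j).powersetCard (k - 1),
      AnalyticOnNhd ℂ (s j B') Set.univ)
    (heq : ∀ z : Fin N → ℂ,
      ∑ B ∈ A.powersetCard k, (∏ l ∈ B, z l) * (∑ j ∈ B, s j (B.erase j) z) = 0) :
    ∃ s' : Fin N → Finset (Fin N) → ((Fin N → ℂ) → ℂ),
      (∀ i ∈ A, ∀ B ∈ (A.erase i).powersetCard k,
        AnalyticOnNhd ℂ (s' i B) Set.univ) ∧
      ∀ B ∈ A.powersetCard k, ∀ z : Fin N → ℂ,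
        ∑ j ∈ B, s j (B.erase j) z = ∑ i ∈ A \ B, z i * s' i B z := by
  have hf : ∀ B ∈ A.powersetCard k,
      AnalyticOnNhd ℂ (fun z => ∑ j ∈ B, s j (B.erase j) z) univ := by
    intro B hB z _
    obtain ⟨hBA, hBk⟩ := Finset.mem_powersetCard.1 hB
    refine Finset.analyticAt_fun_sum B fun j hj => hs j (hBA hj) _ ?_ z trivial
    exact Finset.mem_powersetCard.2
      ⟨Finset.erase_subset_erase j hBA, by rw [Finset.card_erase_of_mem hj, hBk]⟩
  have hvan : ∀ B ∈ A.powersetCard k, ∀ z : Fin N → ℂ, (∀ l ∈ A \ B, z l = 0) →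
      ∑ j ∈ B, s j (B.erase j) z = 0 := fun B hB z =>
    apply_eq_zero_of_prod_mul_eq_zero Finset.disjoint_sdiff (hf B hB).continuous fun z hz => by
      simpa [Finset.sum_powersetCard_prod_mul_eq hB hz] using heq z
  choose! g hg hgF using fun B hB =>
    CoordDivision.exists_eq_sum_coord_mul (A \ B) (hf B hB) (hvan B hB)
  exact ⟨fun i B => g B i, fun i _ B hB => hg B (Finset.powersetCard_mono (A.erase_subset i) hB) i,
    hgF⟩

/-- Theorem DAk for the trivial bundle over ℂᴺ: given entire functions
s_{j,B'} indexed by j ∈ A and (k−1)-element subsets B' ⊆ A∖{j} satisfying the S_{A,k}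
relation, there exist entire functions s'_{i,B} realizing each sum Σ_{j∈B} s_{j,B∖{j}}
as Σ_{i∈A∖B} z_i s'_{i,B}. -/
theorem stmt_5 (N : ℕ) (A : Finset (Fin N)) (k : ℕ) (hk1 : 1 ≤ k) (hk2 : k ≤ A.card)
    (s : Fin N → Finset (Fin N) → ((Fin N → ℂ) → ℂ))
    (hs : ∀ j ∈ A, ∀ B' ∈ (A.erase j).powersetCard (k - 1),
      AnalyticOnNhd ℂ (s j B') Set.univ)
    (heq : ∀ z : Fin N → ℂ,
      ∑ B ∈ A.powersetCard k, (∏ l ∈ B, z l) * (∑ j ∈ B, s j (B.erase j) z) = 0) :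
    ∃ s' : Fin N → Finset (Fin N) → ((Fin N → ℂ) → ℂ),
      (∀ i ∈ A, ∀ B ∈ (A.erase i).powersetCard k,
        AnalyticOnNhd ℂ (s' i B) Set.univ) ∧
      ∀ B ∈ A.powersetCard k, ∀ z : Fin N → ℂ,
        ∑ j ∈ B, s j (B.erase j) z = ∑ i ∈ A \ B, z i * s' i B z :=
  stmt_5_general N A k s hs heq
end

section
/- Let R be a commutative ring, let A be a finite set, let t : A → R, and let k be an integer with 1 ≤ k ≤ |A|. Let s_{j,B'} ∈ R be elements indexed by j ∈ A and (k−1)-element subsets B' of A∖{j}, satisfying Σ_{B ∈ (A choose k)} (Π_{ℓ ∈ B} t_ℓ) · (Σ_{j ∈ B} s_{j, B∖{j}}) = 0. Let s'_{i,B} ∈ R be elements indexed by i ∈ A and k-element subsets B of A∖{i}, satisfying, for every k-element subset B of A, Σ_{j ∈ B} s_{j, B∖{j}} = Σ_{i ∈ A∖B} t_i · s'_{i,B}. Then Σ_{B̃ ∈ (A choose k+1)} (Π_{ℓ ∈ B̃} t_ℓ) · (Σ_{j ∈ B̃} s'_{j, B̃∖{j}}) = 0. -/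
/-- if (s_{j,B'}) lies in S_{A,k} and (s'_{i,B}) solves the divisibility
equations of Theorem DAk, then (s'_{i,B}) lies in S_{A,k+1}. -/
theorem stmt_7 {R : Type*} [CommRing R] {ι : Type*} [DecidableEq ι]
    (A : Finset ι) (t : ι → R) (k : ℕ) (hk1 : 1 ≤ k) (hk2 : k ≤ A.card)
    (s s' : ι → Finset ι → R)
    (h1 : ∑ B ∈ A.powersetCard k, (∏ l ∈ B, t l) * (∑ j ∈ B, s j (B.erase j)) = 0)
    (h2 : ∀ B ∈ A.powersetCard k,
      ∑ j ∈ B, s j (B.erase j) = ∑ i ∈ A \ B, t i * s' i B) :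
    ∑ Bt ∈ A.powersetCard (k + 1), (∏ l ∈ Bt, t l) * (∑ j ∈ Bt, s' j (Bt.erase j)) = 0 := by
  have key : ∑ Bt ∈ A.powersetCard (k + 1), (∏ l ∈ Bt, t l) * (∑ j ∈ Bt, s' j (Bt.erase j))
      = ∑ B ∈ A.powersetCard k, (∏ l ∈ B, t l) * (∑ i ∈ A \ B, t i * s' i B) := by
    simp_rw [Finset.mul_sum]
    rw [Finset.sum_sigma', Finset.sum_sigma']
    refine Finset.sum_nbij' (fun p => ⟨p.1.erase p.2, p.2⟩)
      (fun p => ⟨insert p.2 p.1, p.2⟩) ?_ ?_ ?_ ?_ ?_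
    · rintro ⟨Bt, j⟩ hp
      simp only [Finset.mem_sigma, Finset.mem_powersetCard] at hp ⊢
      obtain ⟨⟨hsub, hcard⟩, hj⟩ := hp
      refine ⟨⟨(Finset.erase_subset _ _).trans hsub, ?_⟩, ?_⟩
      · simp [Finset.card_erase_of_mem hj, hcard]
      · simp [Finset.mem_sdiff, hsub hj]
    · rintro ⟨B, i⟩ hp
      simp only [Finset.mem_sigma, Finset.mem_powersetCard, Finset.mem_sdiff] at hp ⊢
      obtain ⟨⟨hsub, hcard⟩, hiA, hiB⟩ := hp
      refine ⟨⟨Finset.insert_subset hiA hsub, ?_⟩, Finset.mem_insert_self _ _⟩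
      rw [Finset.card_insert_of_notMem hiB, hcard]
    · rintro ⟨Bt, j⟩ hp
      simp only [Finset.mem_sigma, Finset.mem_powersetCard] at hp
      simp [Finset.insert_erase hp.2]
    · rintro ⟨B, i⟩ hp
      simp only [Finset.mem_sigma, Finset.mem_powersetCard, Finset.mem_sdiff] at hp
      simp [Finset.erase_insert hp.2.2]
    · rintro ⟨Bt, j⟩ hp
      simp only [Finset.mem_sigma, Finset.mem_powersetCard] at hp
      have := Finset.mul_prod_erase Bt t hp.2
      dsimp only
      rw [← this]
      ring
  rw [key, ← h1]
  exact Finset.sum_congr rfl fun B hB => by rw [h2 B hB]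
end

section
/- Let m ≥ 1 and r, k ≥ 0 be integers, let ℓ⁽¹⁾, …, ℓ⁽ᵐ⁾ be pairwise distinct elements of ℤʳ, and let σ₁, …, σ_m be entire functions on ℂʳ × ℂᵏ. Suppose that Σ_{j=1}^{m} (Π_{i=1}^{r} t_i^{ℓ⁽ʲ⁾_i}) · σ_j(t, w) = 0 for every (t, w) ∈ ℂʳ × ℂᵏ with t_i ≠ 0 for all i. Then there exists j ∈ {1, …, m} such that σ_j(0, w) = 0 for all w ∈ ℂᵏ. -/
open Finset Filter Topology

/-!
Restrict to the monomial curve `t i = s ^ N ^ i` for a base `N` exceeding every difference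
of exponents. Uniqueness of balanced base-`N` expansions makes the exponents
`e j = ∑ i, l j i * N ^ i` of `s` pairwise distinct, so there is a unique smallest one `e j₀`.
Dividing the relation by `s ^ e j₀` leaves a function continuous at `s = 0` that vanishes for
`s ≠ 0`, and its value at `0` is `σ j₀ (0, w)`.
-/

theorem Finset.prod_zpow_eq_zpow_sum₀ {ι G₀ : Type*} [CommGroupWithZero G₀] {a : G₀}
    (ha : a ≠ 0) (s : Finset ι) (f : ι → ℤ) : ∏ i ∈ s, a ^ f i = a ^ ∑ i ∈ s, f i := by
  classical
  induction s using Finset.induction with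
  | empty => simp
  | insert i s hi ih => rw [prod_insert hi, sum_insert hi, zpow_add₀ ha, ih]

theorem prod_pow_pow_zpow_eq_zpow_sum {G₀ : Type*} [CommGroupWithZero G₀] {s : G₀}
    (hs : s ≠ 0) (N : ℕ) {r : ℕ} (a : Fin r → ℤ) :
    ∏ i : Fin r, (s ^ N ^ (i : ℕ)) ^ a i = s ^ ∑ i : Fin r, a i * (N : ℤ) ^ (i : ℕ) := by
  rw [← prod_zpow_eq_zpow_sum₀ hs]
  refine prod_congr rfl fun i _ => ?_
  rw [mul_comm, zpow_mul, ← zpow_natCast]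
  push_cast; rfl

theorem Int.eq_zero_of_sum_mul_pow_eq_zero {M : ℤ} :
    ∀ {n : ℕ} {d : Fin n → ℤ}, (∀ i, |d i| < M) →
      ∑ i, d i * M ^ (i : ℕ) = 0 → d = 0
  | 0, _, _, _ => Subsingleton.elim _ _
  | n + 1, d, hd, h => by
    rw [Fin.sum_univ_succ] at h
    have htail : ∑ i : Fin n, d i.succ * M ^ ((i : ℕ) + 1) =
        M * ∑ i : Fin n, d i.succ * M ^ (i : ℕ) := by
      rw [mul_sum]; exact sum_congr rfl fun i _ => by ring
    simp only [Fin.val_succ, Fin.val_zero, pow_zero, mul_one, htail] at h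
    have hd0 : d 0 = 0 := Int.eq_zero_of_abs_lt_dvd
      ⟨-∑ i : Fin n, d i.succ * M ^ (i : ℕ), by linear_combination h⟩ (hd 0)
    have hM : M ≠ 0 := ((abs_nonneg _).trans_lt (hd 0)).ne'
    have hrest := eq_zero_of_sum_mul_pow_eq_zero (fun i => hd i.succ)
      (by simpa [hd0, hM] using h)
    ext i
    exact Fin.cases hd0 (fun i => congrFun hrest i) i

theorem Int.eq_of_sum_mul_pow_eq {M : ℤ} {n : ℕ} {a b : Fin n → ℤ}
    (hab : ∀ i, |a i - b i| < M) (h : ∑ i, a i * M ^ (i : ℕ) = ∑ i, b i * M ^ (i : ℕ)) :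
    a = b :=
  sub_eq_zero.1 <| Int.eq_zero_of_sum_mul_pow_eq_zero (d := a - b) hab (by simp [sub_mul, h])

theorem exists_nat_abs_sub_lt {ι κ : Type*} [Finite ι] [Finite κ] (l : ι → κ → ℤ) :
    ∃ N : ℕ, ∀ j j' i, |l j i - l j' i| < N := by
  obtain ⟨B, hB⟩ :=
    Finite.bddAbove_range fun p : ι × ι × κ => |l p.1 p.2.2 - l p.2.1 p.2.2|
  refine ⟨B.toNat + 1, fun j j' i => ?_⟩
  have : |l j i - l j' i| ≤ B := hB ⟨(j, j', i), rfl⟩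
  push_cast
  omega

theorem apply_zero_eq_zero_of_sum_zpow_mul_eq_zero {ι 𝕜 : Type*} [Fintype ι]
    [NontriviallyNormedField 𝕜] {e : ι → ℤ} {g : ι → 𝕜 → 𝕜} {j₀ : ι}
    (he : ∀ j ≠ j₀, e j₀ < e j) (hg : ∀ j, ContinuousAt (g j) 0)
    (hsum : ∀ s ≠ 0, ∑ j, s ^ e j * g j s = 0) : g j₀ 0 = 0 := by
  classical
  set F : 𝕜 → 𝕜 := fun s => ∑ j, s ^ (e j - e j₀).toNat * g j s
  have hcont : ContinuousAt F 0 := by fun_prop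
  have hpunct : ∀ s ≠ 0, F s = 0 := by
    intro s hs
    have hpow : ∀ j, s ^ (e j - e j₀).toNat = (s ^ e j₀)⁻¹ * s ^ e j := fun j => by
      rw [← zpow_natCast, Int.toNat_of_nonneg, zpow_sub₀ hs, div_eq_inv_mul]
      by_cases hj : j = j₀
      · simp [hj]
      · linarith [he j hj]
    simp only [F, hpow, mul_assoc, ← mul_sum, hsum s hs, mul_zero]
  have h0 : F 0 = g j₀ 0 := by
    simp only [F]
    rw [sum_eq_single j₀ (fun j _ hj => ?_) (fun h => absurd (mem_univ _) h)]
    · simp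
    · rw [zero_pow (by have := he j hj; omega), zero_mul]
  rw [← h0]
  exact tendsto_nhds_unique (hcont.tendsto.mono_left nhdsWithin_le_nhds) <|
    tendsto_const_nhds.congr' <|
      eventually_nhdsWithin_of_forall (s := {0}ᶜ) fun s hs => (hpunct s hs).symm

/-- "linear independence lemma" for the trivial family ℂʳ × ℂᵏ → ℂʳ:
if distinct Laurent monomial twists of entire functions σ_j sum to zero on the set where
all t_i ≠ 0, then some σ_j vanishes on the special fibre {0} × ℂᵏ. -/
theorem stmt_8 (m r k : ℕ) (hm : 1 ≤ m)
    (l : Fin m → Fin r → ℤ) (hl : Function.Injective l)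
    (σ : Fin m → ((Fin r → ℂ) × (Fin k → ℂ)) → ℂ)
    (hσ : ∀ j, AnalyticOnNhd ℂ (σ j) Set.univ)
    (heq : ∀ (t : Fin r → ℂ) (w : Fin k → ℂ), (∀ i, t i ≠ 0) →
      ∑ j, (∏ i, t i ^ l j i) * σ j (t, w) = 0) :
    ∃ j, ∀ w : Fin k → ℂ, σ j (0, w) = 0 := by
  have : Nonempty (Fin m) := ⟨⟨0, hm⟩⟩
  obtain ⟨N, hN⟩ := exists_nat_abs_sub_lt l
  set e : Fin m → ℤ := fun j => ∑ i, l j i * (N : ℤ) ^ (i : ℕ)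
  have he : Function.Injective e := fun j j' h => hl (Int.eq_of_sum_mul_pow_eq (hN j j') h)
  obtain ⟨j₀, hj₀⟩ := Finite.exists_min e
  refine ⟨j₀, fun w => ?_⟩
  set curve : ℂ → Fin r → ℂ := fun s i => s ^ N ^ (i : ℕ)
  have hcurve0 : curve 0 = 0 := funext fun i => zero_pow <| pow_ne_zero _ <| by
    simpa [Nat.pos_iff_ne_zero] using hN j₀ j₀ i
  rw [← hcurve0]
  refine apply_zero_eq_zero_of_sum_zpow_mul_eq_zero (e := e) (g := fun j s => σ j (curve s, w))
    (fun j hj => (hj₀ j).lt_of_ne fun h => hj (he h).symm)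
    (fun j => (hσ j _ trivial).continuousAt.comp (by fun_prop)) fun s hs => ?_
  rw [← heq (curve s) w fun i => pow_ne_zero _ hs]
  simp only [curve, prod_pow_pow_zpow_eq_zpow_sum hs, e]
end

section
/- Let D = {t ∈ ℂ : |t| < R} with 0 < R ≤ ∞, and let B = {z ∈ ℂᵏ : |z_i| < ρ_i for all i} be an open polydisk centered at the origin (0 < ρ_i ≤ ∞). Let m₁, …, m_k be nonpositive integers, let m ∈ ℤ, and let f be holomorphic on (D∖{0}) × B such that f(a·t, a^{m₁}z₁, …, a^{m_k}z_k) = a^m · f(t, z) for every a ∈ ℂ with |a| = 1 and every (t, z) ∈ (D∖{0}) × B. Then the function (t, z) ↦ t^{−m} f(t, z) on (D∖{0}) × B extends to a holomorphic function on D × B. -/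
/-!
Fix `(t, z)` with `t ≠ 0`. The functions `a ↦ f (a t, a^m z)` and `a ↦ a^μ f (t, z)` are
holomorphic on the set of `a ≠ 0` for which `(a t, a^m z)` stays in `(D ∖ {0}) × B`, and they agree
on the unit circle. Because the weights `mᵢ` are nonpositive this set is an annulus, hence
connected, so the identity theorem makes them agree on all of it. For a fixed radius `0 < r` inside
`D` and `0 < |t| ≤ r`, the choice `a = r / t` gives
`t^(-μ) f (t, z) = r^(-μ) f (r, (t / r)^(-m) z)`, and the right-hand side is holomorphic up to
`t = 0` since the exponents `-mᵢ` are nonnegative.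
-/

open scoped ENNReal Topology
open Filter Set Metric

theorem frequently_mem_sphere_nhdsNE_one : ∃ᶠ a in 𝓝[≠] (1 : ℂ), a ∈ sphere (0 : ℂ) 1 := by
  have hderiv : HasDerivAt (fun θ : ℝ => Complex.exp (θ * Complex.I)) Complex.I 0 := by
    simpa using ((hasDerivAt_id (0 : ℝ)).ofReal_comp.mul_const Complex.I).cexp
  have hlim := hderiv.tendsto_nhdsNE Complex.I_ne_zero
  simp only [Complex.ofReal_zero, zero_mul, Complex.exp_zero] at hlim
  exact hlim.frequently (Frequently.of_forall fun θ => by simp)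

theorem AnalyticOnNhd.eqOn_of_preconnected_of_eqOn_sphere {E : Type*}
    [NormedAddCommGroup E] [NormedSpace ℂ E] {φ ψ : ℂ → E} {A : Set ℂ}
    (hφ : AnalyticOnNhd ℂ φ A) (hψ : AnalyticOnNhd ℂ ψ A) (hA : IsPreconnected A) (h1 : 1 ∈ A)
    (h : EqOn φ ψ (sphere 0 1)) : EqOn φ ψ A :=
  hφ.eqOn_of_preconnected_of_frequently_eq hψ hA h1 (frequently_mem_sphere_nhdsNE_one.mono h)

theorem isPreconnected_norm_preimage {E : Type*} [NormedAddCommGroup E] [NormedSpace ℝ E]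
    (hE : 1 < Module.rank ℝ E) {I : Set ℝ} (hI : IsPreconnected I) (hI0 : I ⊆ Ioi 0) :
    IsPreconnected (norm ⁻¹' I : Set E) := by
  have hpolar : (norm ⁻¹' I : Set E) = (fun p : E × ℝ => p.2 • p.1) '' (sphere 0 1 ×ˢ I) := by
    ext a
    constructor
    · intro ha
      have ha0 : ‖a‖ ≠ 0 := (hI0 ha).ne'
      refine ⟨(‖a‖⁻¹ • a, ‖a‖), ⟨?_, ha⟩, ?_⟩
      · simp [norm_smul, ha0]
      · simp [smul_smul, ha0]
    · rintro ⟨⟨u, x⟩, ⟨hu, hx⟩, rfl⟩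
      have : ‖u‖ = 1 := by simpa using hu
      simpa [norm_smul, this, abs_of_pos (mem_Ioi.mp (hI0 hx))] using hx
  rw [hpolar]
  exact ((isPreconnected_sphere hE 0 1).prod hI).image _ (by fun_prop)

theorem AnalyticOnNhd.piecewise_of_eqOn {𝕜 E F : Type*} [NontriviallyNormedField 𝕜]
    [NormedAddCommGroup E] [NormedSpace 𝕜 E] [NormedAddCommGroup F] [NormedSpace 𝕜 F]
    {U V : Set E} [DecidablePred (· ∈ V)] {g h : E → F} (hU : IsOpen U) (hV : IsOpen V)
    (hg : AnalyticOnNhd 𝕜 g U) (hh : AnalyticOnNhd 𝕜 h V) (hgh : EqOn g h (U ∩ V)) :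
    AnalyticOnNhd 𝕜 (V.piecewise h g) (U ∪ V) := by
  rintro x (hxU | hxV)
  · refine (hg x hxU).congr (eventually_of_mem (hU.mem_nhds hxU) fun y hy => ?_)
    by_cases hyV : y ∈ V
    · rw [piecewise_eq_of_mem _ _ _ hyV, hgh ⟨hy, hyV⟩]
    · rw [piecewise_eq_of_notMem _ _ _ hyV]
  · exact (hh x hxV).congr (eventually_of_mem (hV.mem_nhds hxV) fun y hy =>
      (piecewise_eq_of_mem _ _ _ hy).symm)

def disk (R : ℝ≥0∞) : Set ℂ := {t | (‖t‖₊ : ℝ≥0∞) < R}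

def polydisk {k : ℕ} (ρ : Fin k → ℝ≥0∞) : Set (Fin k → ℂ) := {z | ∀ i, (‖z i‖₊ : ℝ≥0∞) < ρ i}

theorem isOpen_disk (R : ℝ≥0∞) : IsOpen (disk R) :=
  isOpen_lt (by fun_prop) continuous_const

theorem isOpen_polydisk {k : ℕ} (ρ : Fin k → ℝ≥0∞) : IsOpen (polydisk ρ) := by
  simp only [polydisk, ofPred_forall]
  exact isOpen_iInter_of_finite fun i => isOpen_lt (by fun_prop) continuous_const

theorem mem_polydisk_of_norm_le {k : ℕ} {ρ : Fin k → ℝ≥0∞} {z w : Fin k → ℂ}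
    (hz : z ∈ polydisk ρ) (h : ∀ i, ‖w i‖ ≤ ‖z i‖) : w ∈ polydisk ρ :=
  fun i => lt_of_le_of_lt (by exact_mod_cast h i) (hz i)

noncomputable def weightedSMul {k : ℕ} (m : Fin k → ℤ) (a : ℂ) (p : ℂ × (Fin k → ℂ)) :
    ℂ × (Fin k → ℂ) :=
  (a * p.1, fun i => a ^ m i * p.2 i)

/-- `rescale m r p = weightedSMul m (r / p.1) p` when `p.1 ≠ 0`, written so that it makes sense
at `p.1 = 0`. -/
noncomputable def rescale {k : ℕ} (m : Fin k → ℤ) (r : ℝ) (p : ℂ × (Fin k → ℂ)) :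
    ℂ × (Fin k → ℂ) :=
  ((r : ℂ), fun i => (p.1 / r) ^ (-m i) * p.2 i)

section WeightedSMul

variable {k : ℕ} {m : Fin k → ℤ} {μ : ℤ} {f : ℂ × (Fin k → ℂ) → ℂ}

theorem analyticAt_weightedSMul (m : Fin k → ℤ) (p : ℂ × (Fin k → ℂ)) {a : ℂ} (ha : a ≠ 0) :
    AnalyticAt ℂ (fun b => weightedSMul m b p) a := by
  refine (analyticAt_id.mul analyticAt_const).prod (analyticAt_pi_iff.2 fun i => ?_)
  exact (analyticAt_id.fun_zpow ha).mul analyticAt_const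

theorem apply_weightedSMul_eq_zpow_mul {Ω : Set (ℂ × (Fin k → ℂ))} (hf : AnalyticOnNhd ℂ f Ω)
    (heq : ∀ a : ℂ, ‖a‖ = 1 → ∀ p ∈ Ω, f (weightedSMul m a p) = a ^ μ * f p)
    {p : ℂ × (Fin k → ℂ)} (hp : p ∈ Ω)
    (hconn : IsPreconnected {a : ℂ | a ≠ 0 ∧ weightedSMul m a p ∈ Ω})
    {a : ℂ} (ha0 : a ≠ 0) (ha : weightedSMul m a p ∈ Ω) :
    f (weightedSMul m a p) = a ^ μ * f p := by
  refine AnalyticOnNhd.eqOn_of_preconnected_of_eqOn_sphere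
    (φ := fun b => f (weightedSMul m b p))
    (fun b hb => (hf _ hb.2).comp (analyticAt_weightedSMul m p hb.1))
    (fun b hb => (analyticAt_id.fun_zpow hb.1).mul analyticAt_const) hconn
    ⟨one_ne_zero, by simpa [weightedSMul] using hp⟩
    (fun b hb => heq b (by simpa using hb) p hp) ⟨ha0, ha⟩

variable {R : ℝ≥0∞} {ρ : Fin k → ℝ≥0∞}

/-- Membership only depends on `‖a‖`, and since `mᵢ ≤ 0` the admissible values of `‖a‖` form an
interval: `‖a t‖ < R` bounds `‖a‖` from above, each `‖a‖^mᵢ ‖zᵢ‖ < ρᵢ` from below. -/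
theorem isPreconnected_setOf_weightedSMul_mem (hm : ∀ i, m i ≤ 0) {t : ℂ} (ht : t ≠ 0)
    (z : Fin k → ℂ) :
    IsPreconnected {a : ℂ | a ≠ 0 ∧ weightedSMul m a (t, z) ∈ (disk R \ {0}) ×ˢ polydisk ρ} := by
  set I : Set ℝ := {x | 0 < x ∧ ENNReal.ofReal (x * ‖t‖) < R ∧
    ∀ i, ENNReal.ofReal (x ^ m i * ‖z i‖) < ρ i}
  have hI : I.OrdConnected := by
    refine ⟨fun x hx w hw y ⟨hxy, hyw⟩ => ⟨hx.1.trans_le hxy, ?_, fun i => ?_⟩⟩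
    · exact (ENNReal.ofReal_le_ofReal (by gcongr)).trans_lt hw.2.1
    · refine (ENNReal.ofReal_le_ofReal ?_).trans_lt (hx.2.2 i)
      gcongr
      simpa [zpow_neg] using inv_anti₀ (zpow_pos hx.1 (-m i))
        (zpow_le_zpow_left₀ (neg_nonneg.2 (hm i)) hx.1.le hxy)
  convert isPreconnected_norm_preimage (E := ℂ) (by rw [Complex.rank_real_complex]; norm_num)
    hI.isPreconnected fun x hx => hx.1 using 1
  ext a
  simp only [I, weightedSMul, disk, polydisk, mem_ofPred_eq, mem_prod, Set.mem_sdiff,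
    mem_singleton_iff, mem_preimage, ← enorm_eq_nnnorm, ← ofReal_norm, norm_mul, norm_zpow,
    mul_eq_zero, ht, or_false, norm_pos_iff]
  tauto

theorem rescale_mem (hm : ∀ i, m i ≤ 0) {r : ℝ} (hr : 0 < r) (hrR : ENNReal.ofReal r < R)
    {p : ℂ × (Fin k → ℂ)} (hp : p ∈ closedBall 0 r ×ˢ polydisk ρ) :
    rescale m r p ∈ (disk R \ {0}) ×ˢ polydisk ρ := by
  refine ⟨⟨?_, by simpa [rescale] using hr.ne'⟩, mem_polydisk_of_norm_le hp.2 fun i => ?_⟩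
  · simpa [disk, rescale, ← enorm_eq_nnnorm, ← ofReal_norm, abs_of_pos hr] using hrR
  · have hle : ‖p.1 / r‖ ≤ 1 := by
      rw [norm_div, Complex.norm_real, Real.norm_of_nonneg hr.le]
      exact div_le_one_of_le₀ (mem_closedBall_zero_iff.1 hp.1) hr.le
    obtain ⟨n, hn⟩ := Int.eq_ofNat_of_zero_le (neg_nonneg.2 (hm i))
    simp only [rescale, hn, zpow_natCast, norm_mul, norm_pow]
    exact mul_le_of_le_one_left (norm_nonneg _) (pow_le_one₀ (norm_nonneg _) hle)

theorem analyticOnNhd_comp_rescale (hm : ∀ i, m i ≤ 0)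
    (hf : AnalyticOnNhd ℂ f ((disk R \ {0}) ×ˢ polydisk ρ))
    {r : ℝ} (hr : 0 < r) (hrR : ENNReal.ofReal r < R) :
    AnalyticOnNhd ℂ (fun p => f (rescale m r p)) (closedBall 0 r ×ˢ polydisk ρ) := by
  intro p hp
  have hrescale : AnalyticAt ℂ (rescale m r) p :=
    analyticAt_const.prod <| analyticAt_pi_iff.2 fun i =>
      (analyticAt_fst.div_const.fun_zpow_nonneg (neg_nonneg.2 (hm i))).mul
        (((ContinuousLinearMap.proj i : (Fin k → ℂ) →L[ℂ] ℂ).analyticAt _).comp analyticAt_snd)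
  exact (hf _ (rescale_mem hm hr hrR hp)).comp_of_eq hrescale rfl

theorem zpow_mul_apply_rescale (hm : ∀ i, m i ≤ 0)
    (hf : AnalyticOnNhd ℂ f ((disk R \ {0}) ×ˢ polydisk ρ))
    (heq : ∀ a : ℂ, ‖a‖ = 1 → ∀ p ∈ (disk R \ {0}) ×ˢ polydisk ρ,
      f (weightedSMul m a p) = a ^ μ * f p)
    {r : ℝ} (hr : 0 < r) (hrR : ENNReal.ofReal r < R) {p : ℂ × (Fin k → ℂ)}
    (hp : p ∈ (disk R \ {0}) ×ˢ polydisk ρ) (hpr : ‖p.1‖ ≤ r) :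
    (r : ℂ) ^ (-μ) * f (rescale m r p) = p.1 ^ (-μ) * f p := by
  obtain ⟨t, z⟩ := p
  have ht0 : t ≠ 0 := hp.1.2
  have hr0 : (r : ℂ) ≠ 0 := by exact_mod_cast hr.ne'
  have hsmul : weightedSMul m (r / t) (t, z) = rescale m r (t, z) := by
    simp [weightedSMul, rescale, div_mul_cancel₀ _ ht0, zpow_neg, ← inv_zpow, inv_div]
  have hmem := rescale_mem hm hr hrR ⟨mem_closedBall_zero_iff.2 hpr, hp.2⟩
  rw [← hsmul, apply_weightedSMul_eq_zpow_mul hf heq hp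
    (isPreconnected_setOf_weightedSMul_mem hm ht0 z) (div_ne_zero hr0 ht0) (hsmul ▸ hmem),
    div_zpow, ← mul_assoc, zpow_neg, zpow_neg]
  field_simp

end WeightedSMul

theorem stmt_11_general (k : ℕ) (R : ℝ≥0∞) (hR : 0 < R)
    (D : Set ℂ) (hD : D = {t : ℂ | (‖t‖₊ : ℝ≥0∞) < R})
    (ρ : Fin k → ℝ≥0∞)
    (B : Set (Fin k → ℂ)) (hB : B = {z | ∀ i, (‖z i‖₊ : ℝ≥0∞) < ρ i})
    (m : Fin k → ℤ) (hm : ∀ i, m i ≤ 0) (μ : ℤ)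
    (f : ℂ × (Fin k → ℂ) → ℂ)
    (hf : AnalyticOnNhd ℂ f ((D \ {0}) ×ˢ B))
    (heq : ∀ a : ℂ, ‖a‖ = 1 → ∀ p ∈ (D \ {0}) ×ˢ B,
      f (a * p.1, fun i => a ^ m i * p.2 i) = a ^ μ * f p) :
    ∃ F : ℂ × (Fin k → ℂ) → ℂ, AnalyticOnNhd ℂ F (D ×ˢ B) ∧
      ∀ p ∈ (D \ {0}) ×ˢ B, F p = p.1 ^ (-μ) * f p := by
  classical
  subst hD hB
  change AnalyticOnNhd ℂ f ((disk R \ {0}) ×ˢ polydisk ρ) at hf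
  obtain ⟨r, hr, hrR⟩ : ∃ r : ℝ, 0 < r ∧ ENNReal.ofReal r < R := by
    obtain ⟨r, -, hr0, hrR⟩ := ENNReal.lt_iff_exists_real_btwn.1 hR
    exact ⟨r, ENNReal.ofReal_pos.1 hr0, hrR⟩
  refine ⟨((disk R \ {0}) ×ˢ polydisk ρ).piecewise (fun p => p.1 ^ (-μ) * f p)
      (fun p => (r : ℂ) ^ (-μ) * f (rescale m r p)),
    ?_, fun p hp => piecewise_eq_of_mem _ _ _ hp⟩
  refine AnalyticOnNhd.mono (AnalyticOnNhd.piecewise_of_eqOn (U := ball 0 r ×ˢ polydisk ρ)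
    (isOpen_ball.prod (isOpen_polydisk ρ))
    (((isOpen_disk R).sdiff isClosed_singleton).prod (isOpen_polydisk ρ)) ?_ ?_ ?_) ?_
  · exact fun p hp => analyticAt_const.mul (analyticOnNhd_comp_rescale hm hf hr hrR p
      (prod_mono ball_subset_closedBall subset_rfl hp))
  · exact fun p hp => (analyticAt_fst.fun_zpow hp.1.2).mul (hf p hp)
  · exact fun p hp => zpow_mul_apply_rescale hm hf heq hr hrR hp.2 (mem_ball_zero_iff.1 hp.1.1).le
  · rintro ⟨t, z⟩ ⟨ht, hz⟩
    by_cases ht0 : t = 0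
    · exact Or.inl ⟨by simpa [ht0] using hr, hz⟩
    · exact Or.inr ⟨⟨ht, ht0⟩, hz⟩

/-- local model at a circle fixed point with nonpositive isotropy weights:
an S¹-equivariant holomorphic function of weight m on (D∖{0}) × B, where the circle acts
with nonpositive weights m₁,…,m_k on the polydisk B, becomes holomorphic on D × B after
twisting by t^{−m}. -/
theorem stmt_11 (k : ℕ) (R : ℝ≥0∞) (hR : 0 < R)
    (D : Set ℂ) (hD : D = {t : ℂ | (‖t‖₊ : ℝ≥0∞) < R})
    (ρ : Fin k → ℝ≥0∞) (hρ : ∀ i, 0 < ρ i)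
    (B : Set (Fin k → ℂ)) (hB : B = {z | ∀ i, (‖z i‖₊ : ℝ≥0∞) < ρ i})
    (m : Fin k → ℤ) (hm : ∀ i, m i ≤ 0) (μ : ℤ)
    (f : ℂ × (Fin k → ℂ) → ℂ)
    (hf : AnalyticOnNhd ℂ f ((D \ {0}) ×ˢ B))
    (heq : ∀ a : ℂ, ‖a‖ = 1 → ∀ p ∈ (D \ {0}) ×ˢ B,
      f (a * p.1, fun i => a ^ m i * p.2 i) = a ^ μ * f p) :
    ∃ F : ℂ × (Fin k → ℂ) → ℂ, AnalyticOnNhd ℂ F (D ×ˢ B) ∧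
      ∀ p ∈ (D \ {0}) ×ˢ B, F p = p.1 ^ (-μ) * f p :=
  stmt_11_general k R hR D hD ρ B hB m hm μ f hf heq
end

section
/- Let n ≥ 1 and k ≥ 0, let f be holomorphic on {t ∈ ℂⁿ : t_i ≠ 0 for all i} × ℂᵏ, and let ℓ⃗ = (ℓ₁, …, ℓₙ) ∈ ℤⁿ. Then the function (t, w) ↦ t₁^{−ℓ₁}⋯tₙ^{−ℓₙ} f(t, w) extends holomorphically to ℂⁿ × ℂᵏ if and only if, for every j ∈ {1, …, n}, the function (t, w) ↦ t_j^{−ℓ_j} f(t, w) extends holomorphically to {t ∈ ℂⁿ : t_i ≠ 0 for all i ≠ j} × ℂᵏ. -/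
/-!
One coordinate at a time this is a Hartogs-type extension. Let `g` be holomorphic on
`{z ≠ 0} × Ω`, `Ω` connected, and agree there with a function `h` holomorphic on `ℂ × D` for
some nonempty open `D ⊆ Ω`. The Cauchy integral `(2πi)⁻¹ ∮_{|u| = R} g(u, y) / (u - z) du` is
holomorphic in `(z, y)` for `|z| < R`, equals `h` on `ℂ × D` by Cauchy's formula, and hence
equals `g` on `{z ≠ 0} × Ω` and does not depend on `R`, by the identity theorem in `y`.
Holomorphy of this parametric integral is proved by writing down its Taylor series in `y`,
whose coefficients are controlled by Cauchy estimates.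

For the theorem, `t_j^{-ℓ_j} f` extends across `{t_j = 0}` where the other coordinates are
nonzero, and differs from `t^{-ℓ} f` by a factor that is holomorphic and nonvanishing there;
so `t^{-ℓ} f` extends across the coordinate hyperplanes one after another. Conversely,
`t_j^{-ℓ_j} f = (∏_{i ≠ j} t_i^{ℓ_i}) t^{-ℓ} f`.
-/

open Set Metric Complex Filter Topology
open scoped Nat

attribute [local fun_prop] analyticAt_fst analyticAt_snd

section Analytic

variable {𝕜 E F : Type*} [NontriviallyNormedField 𝕜] [NormedAddCommGroup E] [NormedSpace 𝕜 E]
  [NormedAddCommGroup F] [NormedSpace 𝕜 F]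

theorem AnalyticOnNhd.eqOn_of_preconnected_of_eqOn_of_isOpen {f g : E → F} {Ω D : Set E}
    (hf : AnalyticOnNhd 𝕜 f Ω) (hg : AnalyticOnNhd 𝕜 g Ω) (hΩ : IsPreconnected Ω)
    (hD : IsOpen D) (hDne : D.Nonempty) (hDΩ : D ⊆ Ω) (hfg : EqOn f g D) : EqOn f g Ω :=
  let ⟨_, hy⟩ := hDne
  hf.eqOn_of_preconnected_of_eventuallyEq hg hΩ (hDΩ hy) (hfg.eventuallyEq_of_mem (hD.mem_nhds hy))

variable [CompleteSpace F]

theorem AnalyticAt.iteratedFDeriv {f : E → F} {x : E} (hf : AnalyticAt 𝕜 f x) (m : ℕ) :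
    AnalyticAt 𝕜 (iteratedFDeriv 𝕜 m f) x :=
  AnalyticOnNhd.iteratedFDeriv (s := {y | AnalyticAt 𝕜 f y}) (fun _ hy => hy) m x hf

theorem IsCompact.exists_forall_closedBall_analyticAt_norm_le {f : E → F} {K : Set E}
    (hK : IsCompact K) (hf : ∀ x ∈ K, AnalyticAt 𝕜 f x) :
    ∃ r > 0, ∃ M, ∀ x ∈ K, ∀ y ∈ closedBall x r, AnalyticAt 𝕜 f y ∧ ‖f y‖ ≤ M := by
  obtain ⟨M, hM⟩ := hK.exists_bound_of_continuousOn fun x hx =>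
    (hf x hx).continuousAt.continuousWithinAt
  have hV : IsOpen {y | AnalyticAt 𝕜 f y ∧ ‖f y‖ < M + 1} := by
    refine isOpen_iff_mem_nhds.2 fun y hy => ?_
    exact hy.1.eventually_analyticAt.and
      (hy.1.continuousAt.norm.eventually (gt_mem_nhds hy.2))
  obtain ⟨δ, hδ, hδV⟩ := hK.exists_thickening_subset_open hV
    fun x hx => ⟨hf x hx, (hM x hx).trans_lt (lt_add_one M)⟩
  refine ⟨δ / 2, half_pos hδ, M + 1, fun x hx y hy => ?_⟩
  have := hδV (ball_subset_thickening hx δ (closedBall_subset_ball (half_lt_self hδ) hy))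
  exact ⟨this.1, this.2.le⟩

end Analytic

section CauchyEstimates

variable {E F : Type*} [NormedAddCommGroup E] [NormedSpace ℂ E]
  [NormedAddCommGroup F] [NormedSpace ℂ F]

theorem norm_fderiv_le_of_forall_mem_closedBall_norm_le {f : E → F} {x : E} {r M : ℝ}
    (hr : 0 < r) (hf : ∀ y ∈ closedBall x r, DifferentiableAt ℂ f y)
    (hM : ∀ y ∈ closedBall x r, ‖f y‖ ≤ M) :
    ‖fderiv ℂ f x‖ ≤ M / r := by
  have hM₀ : 0 ≤ M := (norm_nonneg _).trans (hM x (mem_closedBall_self hr.le))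
  refine ContinuousLinearMap.opNorm_le_bound _ (by positivity) fun w => ?_
  rcases eq_or_ne w 0 with rfl | hw
  · simp
  have hw₀ : 0 < ‖w‖ := norm_pos_iff.2 hw
  have hline : ∀ τ : ℂ, ‖τ‖ ≤ r / ‖w‖ → x + τ • w ∈ closedBall x r := fun τ hτ => by
    rwa [mem_closedBall, dist_self_add_left, norm_smul, ← le_div_iff₀ hw₀]
  have hφ : ∀ τ : ℂ, ‖τ‖ ≤ r / ‖w‖ →
      HasDerivAt (fun σ : ℂ => f (x + σ • w)) (fderiv ℂ f (x + τ • w) w) τ := fun τ hτ => by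
    have h := (hf _ (hline τ hτ)).hasFDerivAt.comp_hasDerivAt τ
      (((hasDerivAt_id τ).smul_const w).const_add x)
    rwa [one_smul] at h
  have hdc : DiffContOnCl ℂ (fun σ : ℂ => f (x + σ • w)) (ball 0 (r / ‖w‖)) := by
    refine DifferentiableOn.diffContOnCl fun τ hτ => ?_
    rw [closure_ball _ (div_pos hr hw₀).ne', mem_closedBall_zero_iff] at hτ
    exact (hφ τ hτ).differentiableAt.differentiableWithinAt
  calc ‖fderiv ℂ f x w‖ = ‖deriv (fun σ : ℂ => f (x + σ • w)) 0‖ := by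
        rw [(hφ 0 (by rw [norm_zero]; positivity)).deriv, zero_smul, add_zero]
    _ ≤ M / (r / ‖w‖) := norm_deriv_le_of_forall_mem_sphere_norm_le (by positivity) hdc
        fun τ hτ => hM _ (hline τ (by rw [mem_sphere_zero_iff_norm] at hτ; exact hτ.le))
    _ = M / r * ‖w‖ := by field_simp

variable [CompleteSpace F]

theorem norm_iteratedFDeriv_le_of_forall_mem_closedBall_norm_le {f : E → F} {s M : ℝ}
    (hs : 0 < s) (m : ℕ) {x : E} (hf : ∀ y ∈ closedBall x (m * s), AnalyticAt ℂ f y)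
    (hM : ∀ y ∈ closedBall x (m * s), ‖f y‖ ≤ M) :
    ‖iteratedFDeriv ℂ m f x‖ ≤ M / s ^ m := by
  induction m generalizing x with
  | zero => simpa using hM x (by simp)
  | succ m ih =>
    have hsub : ∀ y ∈ closedBall x s, closedBall y (m * s) ⊆ closedBall x ((m + 1 : ℕ) * s) :=
      fun y hy => by
        refine (closedBall_subset_closedBall' ?_)
        rw [mem_closedBall] at hy; push_cast; linarith
    rw [← norm_fderiv_iteratedFDeriv, pow_succ, ← div_div]
    refine norm_fderiv_le_of_forall_mem_closedBall_norm_le hs (fun y hy => ?_)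
      fun y hy => ih (fun z hz => hf z (hsub y hy hz)) fun z hz => hM z (hsub y hy hz)
    have hy' := hsub y hy (mem_closedBall_self (by positivity))
    exact ((hf y hy').iteratedFDeriv m).differentiableAt

-- Iterating the first-order estimate on nested balls only gives `M (m / r) ^ m`;
-- `m ^ m ≤ e ^ m m!` turns this into a Cauchy-type bound, with radius `r / e`.
theorem norm_iteratedFDeriv_le_factorial_mul {f : E → F} {x : E} {r M : ℝ} (hr : 0 < r)
    (hf : ∀ y ∈ closedBall x r, AnalyticAt ℂ f y) (hM : ∀ y ∈ closedBall x r, ‖f y‖ ≤ M)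
    (m : ℕ) : ‖iteratedFDeriv ℂ m f x‖ ≤ M * m ! * (Real.exp 1 / r) ^ m := by
  have hM₀ : 0 ≤ M := (norm_nonneg _).trans (hM x (mem_closedBall_self hr.le))
  rcases Nat.eq_zero_or_pos m with rfl | hm
  · simpa using hM x (mem_closedBall_self hr.le)
  have hms : (m : ℝ) * (r / m) = r := by field_simp
  have hfact : (m : ℝ) ^ m ≤ Real.exp 1 ^ m * m ! := by
    have := Real.pow_div_factorial_le_exp (m : ℝ) m.cast_nonneg m
    rw [div_le_iff₀ (by positivity), ← Real.exp_one_pow] at this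
    exact this
  calc ‖iteratedFDeriv ℂ m f x‖ ≤ M / (r / m) ^ m :=
        norm_iteratedFDeriv_le_of_forall_mem_closedBall_norm_le (by positivity) m
          (by rwa [hms]) (by rwa [hms])
    _ = M * (m : ℝ) ^ m / r ^ m := by rw [div_pow]; field_simp
    _ ≤ M * (Real.exp 1 ^ m * m !) / r ^ m := by gcongr
    _ = M * m ! * (Real.exp 1 / r) ^ m := by ring

theorem norm_inv_factorial_smul_iteratedFDeriv_le {f : E → F} {x : E} {r M : ℝ} (hr : 0 < r)
    (hf : ∀ y ∈ closedBall x r, AnalyticAt ℂ f y) (hM : ∀ y ∈ closedBall x r, ‖f y‖ ≤ M)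
    (m : ℕ) (v : E) :
    ‖(m ! : ℂ)⁻¹ • iteratedFDeriv ℂ m f x (fun _ => v)‖ ≤ M * (Real.exp 1 * ‖v‖ / r) ^ m := by
  calc _ ≤ (m ! : ℝ)⁻¹ * (‖iteratedFDeriv ℂ m f x‖ * ‖v‖ ^ m) := by
        rw [norm_smul, norm_inv, Complex.norm_natCast]
        gcongr
        simpa using (iteratedFDeriv ℂ m f x).le_opNorm fun _ => v
    _ ≤ (m ! : ℝ)⁻¹ * (M * m ! * (Real.exp 1 / r) ^ m * ‖v‖ ^ m) := by
        gcongr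
        exact norm_iteratedFDeriv_le_factorial_mul hr hf hM m
    _ = M * (Real.exp 1 * ‖v‖ / r) ^ m := by field_simp; ring

theorem iteratedDeriv_comp_add_smul {f : E → F} {x v : E} {τ : ℂ}
    (hf : AnalyticAt ℂ f (x + τ • v)) (m : ℕ) :
    iteratedDeriv m (fun σ : ℂ => f (x + σ • v)) τ =
      iteratedFDeriv ℂ m f (x + τ • v) (fun _ => v) := by
  induction m generalizing τ with
  | zero => simp
  | succ m ih =>
    have hline : ∀ σ : ℂ, HasDerivAt (fun σ : ℂ => x + σ • v) v σ := fun σ => by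
      simpa using ((hasDerivAt_id σ).smul_const v).const_add x
    have hnear : ∀ᶠ σ in 𝓝 τ, AnalyticAt ℂ f (x + σ • v) :=
      (hline τ).continuousAt.eventually hf.eventually_analyticAt
    have hD : HasDerivAt (fun σ => iteratedFDeriv ℂ m f (x + σ • v) (fun _ => v))
        (fderiv ℂ (iteratedFDeriv ℂ m f) (x + τ • v) v (fun _ => v)) τ :=
      (ContinuousMultilinearMap.apply ℂ (fun _ : Fin m => E) F fun _ => v).hasFDerivAt
        |>.comp_hasDerivAt τ ((hf.iteratedFDeriv m).differentiableAt.hasFDerivAt.comp_hasDerivAt τ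
          (hline τ))
    have heq : iteratedDeriv m (fun σ : ℂ => f (x + σ • v)) =ᶠ[𝓝 τ]
        fun σ => iteratedFDeriv ℂ m f (x + σ • v) (fun _ => v) :=
      hnear.mono fun σ hσ => ih hσ
    rw [iteratedDeriv_succ, heq.deriv_eq, hD.deriv, iteratedFDeriv_succ_apply_left]
    rfl

theorem hasSum_iteratedFDeriv_of_forall_mem_closedBall {f : E → F} {x v : E}
    (hf : ∀ σ ∈ closedBall (0 : ℂ) 1, AnalyticAt ℂ f (x + σ • v)) :
    HasSum (fun m => (m ! : ℂ)⁻¹ • iteratedFDeriv ℂ m f x (fun _ => v)) (f (x + v)) := by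
  have hO : IsOpen {σ : ℂ | AnalyticAt ℂ f (x + σ • v)} :=
    (isOpen_analyticAt ℂ f).preimage (by fun_prop)
  obtain ⟨δ, hδ, hδO⟩ := (isCompact_closedBall (0 : ℂ) 1).exists_thickening_subset_open hO hf
  rw [thickening_closedBall hδ zero_le_one] at hδO
  have hdiff : DifferentiableOn ℂ (fun σ : ℂ => f (x + σ • v)) (ball 0 (δ + 1)) := fun σ hσ =>
    ((hδO hσ).differentiableAt.comp σ (by fun_prop)).differentiableWithinAt
  have hderiv (m : ℕ) : iteratedDeriv m (fun σ : ℂ => f (x + σ • v)) 0 =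
      iteratedFDeriv ℂ m f x (fun _ => v) := by
    simpa using iteratedDeriv_comp_add_smul (hf 0 (mem_closedBall_self zero_le_one)) m
  simpa [hderiv] using Complex.hasSum_taylorSeries_on_ball hdiff (z := 1) (by simpa using hδ)

end CauchyEstimates

section CircleIntegral

variable {E F : Type*} [NormedAddCommGroup E] [NormedSpace ℂ E]
  [NormedAddCommGroup F] [NormedSpace ℂ F]

theorem circleIntegral.hasSum_of_norm_le {f : ℕ → ℂ → F} {g : ℂ → F} {b : ℕ → ℝ} {c : ℂ}
    {R : ℝ} (hf : ∀ m, ContinuousOn (f m) (sphere c |R|))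
    (hb : ∀ m, ∀ z ∈ sphere c |R|, ‖f m z‖ ≤ b m) (hbs : Summable b)
    (hg : ∀ z ∈ sphere c |R|, HasSum (fun m => f m z) (g z)) :
    HasSum (fun m => ∮ z in C(c, R), f m z) (∮ z in C(c, R), g z) := by
  refine intervalIntegral.hasSum_integral_of_dominated_convergence (fun m _ => |R| * b m)
    (fun m => ?_) (fun m => ?_) ?_ intervalIntegrable_const ?_
  · exact (hf m).circleIntegrable'.out.def'.1
  · refine Eventually.of_forall fun θ _ => ?_
    rw [norm_smul, deriv_circleMap, norm_mul, norm_circleMap_zero, norm_I, mul_one]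
    exact mul_le_mul_of_nonneg_left (hb m _ (circleMap_mem_sphere' c R θ)) (abs_nonneg R)
  · exact Eventually.of_forall fun _ _ => hbs.mul_left _
  · exact Eventually.of_forall fun θ _ => (hg _ (circleMap_mem_sphere' c R θ)).const_smul _

variable [CompleteSpace F]

theorem ContinuousMultilinearMap.circleIntegral_apply {ι : Type*} [Fintype ι] {G : ι → Type*}
    [∀ i, NormedAddCommGroup (G i)] [∀ i, NormedSpace ℂ (G i)]
    {T : ℂ → ContinuousMultilinearMap ℂ G F} {c : ℂ} {R : ℝ} (hT : CircleIntegrable T c R)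
    (v : ∀ i, G i) : (∮ z in C(c, R), T z) v = ∮ z in C(c, R), T z v := by
  have := (ContinuousMultilinearMap.apply ℂ G F v).intervalIntegral_comp_comm hT.out
  simpa [circleIntegral] using this.symm

noncomputable def circleIntegralSeries (H : ℂ × E → F) (c : ℂ) (R : ℝ) (x₀ : E) :
    FormalMultilinearSeries ℂ E F := fun m =>
  (m ! : ℂ)⁻¹ • ∮ u in C(c, R),
    (iteratedFDeriv ℂ m H (u, x₀)).compContinuousLinearMap fun _ => .inr ℂ ℂ E

variable {H : ℂ × E → F} {c : ℂ} {R r M : ℝ} {x₀ : E}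

theorem continuousOn_iteratedFDeriv_sphere (hH : ∀ u ∈ sphere c |R|, AnalyticAt ℂ H (u, x₀))
    (m : ℕ) : ContinuousOn (fun u => iteratedFDeriv ℂ m H (u, x₀)) (sphere c |R|) := fun u hu =>
  ((hH u hu).iteratedFDeriv m).continuousAt.comp_continuousWithinAt
    (f := fun u : ℂ => (u, x₀)) (by fun_prop)

theorem circleIntegralSeries_apply (hH : ∀ u ∈ sphere c |R|, AnalyticAt ℂ H (u, x₀)) (m : ℕ)
    (y : E) : circleIntegralSeries H c R x₀ m (fun _ => y) =
      ∮ u in C(c, R), (m ! : ℂ)⁻¹ • iteratedFDeriv ℂ m H (u, x₀) (fun _ => (0, y)) := by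
  have hcont := (ContinuousMultilinearMap.compContinuousLinearMapL fun _ =>
    ContinuousLinearMap.inr ℂ ℂ E).continuous.comp_continuousOn
      (continuousOn_iteratedFDeriv_sphere hH m)
  rw [circleIntegralSeries, smul_apply, circleIntegral.integral_smul,
    ContinuousMultilinearMap.circleIntegral_apply (T := fun u =>
      (iteratedFDeriv ℂ m H (u, x₀)).compContinuousLinearMap fun _ => .inr ℂ ℂ E)
      hcont.circleIntegrable']
  rfl

theorem norm_circleIntegralSeries_le (hr : 0 < r)
    (hM : ∀ u ∈ sphere c |R|, ∀ q ∈ closedBall (u, x₀) r, AnalyticAt ℂ H q ∧ ‖H q‖ ≤ M)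
    (m : ℕ) : ‖circleIntegralSeries H c R x₀ m‖ ≤
      2 * Real.pi * |R| * M * (Real.exp 1 / r) ^ m := by
  have hD : ∀ u ∈ sphere c |R|, ‖(iteratedFDeriv ℂ m H (u, x₀)).compContinuousLinearMap
      fun _ => ContinuousLinearMap.inr ℂ ℂ E‖ ≤ M * m ! * (Real.exp 1 / r) ^ m := fun u hu => by
    refine (ContinuousMultilinearMap.norm_compContinuousLinearMap_le _ _).trans ?_
    calc _ ≤ ‖iteratedFDeriv ℂ m H (u, x₀)‖ * 1 := by
          gcongr
          exact Finset.prod_le_one (fun _ _ => norm_nonneg _)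
            fun _ _ => ContinuousLinearMap.norm_inr_le_one ℂ ℂ E
      _ ≤ _ := (mul_one _).trans_le <| norm_iteratedFDeriv_le_factorial_mul hr
          (fun q hq => (hM u hu q hq).1) (fun q hq => (hM u hu q hq).2) m
  calc _ ≤ (m ! : ℝ)⁻¹ * (2 * Real.pi * |R| * (M * m ! * (Real.exp 1 / r) ^ m)) := by
        rw [circleIntegralSeries, norm_smul, norm_inv, Complex.norm_natCast]
        gcongr
        exact circleIntegral.norm_integral_le_of_norm_le_const' hD
    _ = _ := by field_simp

theorem hasFPowerSeriesOnBall_circleIntegral (hr : 0 < r)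
    (hM : ∀ u ∈ sphere c |R|, ∀ q ∈ closedBall (u, x₀) r, AnalyticAt ℂ H q ∧ ‖H q‖ ≤ M) :
    HasFPowerSeriesOnBall (fun x => ∮ u in C(c, R), H (u, x)) (circleIntegralSeries H c R x₀) x₀
      (ENNReal.ofReal (r / Real.exp 1)) := by
  have hH (u) (hu : u ∈ sphere c |R|) : AnalyticAt ℂ H (u, x₀) :=
    (hM u hu _ (mem_closedBall_self hr.le)).1
  have hρ : 0 < r / Real.exp 1 := by positivity
  refine ⟨?_, by simpa using hρ, fun {y} hy => ?_⟩
  · refine (circleIntegralSeries H c R x₀).le_radius_of_bound (2 * Real.pi * |R| * M) fun m => ?_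
    rw [Real.coe_toNNReal _ hρ.le]
    calc _ ≤ 2 * Real.pi * |R| * M * (Real.exp 1 / r) ^ m * (r / Real.exp 1) ^ m := by
          gcongr; exact norm_circleIntegralSeries_le hr hM m
      _ = 2 * Real.pi * |R| * M := by rw [mul_assoc, ← mul_pow]; field_simp; simp
  rw [Metric.mem_eball, edist_zero_right, ← ofReal_norm, ENNReal.ofReal_lt_ofReal_iff hρ] at hy
  have hq : Real.exp 1 * ‖y‖ / r < 1 := by
    rwa [div_lt_one hr, ← lt_div_iff₀' (Real.exp_pos 1)]
  have hyr : ‖y‖ ≤ r := hy.le.trans (div_le_self hr.le (Real.one_le_exp zero_le_one))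
  simp only [circleIntegralSeries_apply hH]
  refine circleIntegral.hasSum_of_norm_le (b := fun m => M * (Real.exp 1 * ‖y‖ / r) ^ m)
    (fun m => ?_) (fun m u hu => ?_) ((summable_geometric_of_lt_one (by positivity) hq).mul_left M)
    fun u hu => ?_
  · exact ((ContinuousMultilinearMap.apply ℂ _ F fun _ => ((0 : ℂ), y)).continuous.comp_continuousOn
      (continuousOn_iteratedFDeriv_sphere hH m)).const_smul _
  · simpa using norm_inv_factorial_smul_iteratedFDeriv_le hr (fun q hq => (hM u hu q hq).1)
      (fun q hq => (hM u hu q hq).2) m ((0 : ℂ), y)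
  · have hdisc (σ : ℂ) (hσ : σ ∈ closedBall 0 1) :
        (u, x₀) + σ • ((0 : ℂ), y) ∈ closedBall (u, x₀) r := by
      rw [mem_closedBall_zero_iff] at hσ
      rw [mem_closedBall, dist_self_add_left, norm_smul, Prod.norm_def]
      simpa using mul_le_mul hσ hyr (norm_nonneg y) zero_le_one
    simpa using hasSum_iteratedFDeriv_of_forall_mem_closedBall fun σ hσ =>
      (hM u hu _ (hdisc σ hσ)).1

theorem analyticAt_circleIntegral (hH : ∀ u ∈ sphere c |R|, AnalyticAt ℂ H (u, x₀)) :
    AnalyticAt ℂ (fun x => ∮ u in C(c, R), H (u, x)) x₀ := by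
  obtain ⟨r, hr, M, hM⟩ := ((isCompact_sphere c |R|).image
    (by fun_prop : Continuous fun u : ℂ => (u, x₀))).exists_forall_closedBall_analyticAt_norm_le
      (forall_mem_image.2 hH)
  exact (hasFPowerSeriesOnBall_circleIntegral hr fun u hu =>
    hM _ (mem_image_of_mem _ hu)).analyticAt

end CircleIntegral

section Hartogs

variable {Y F : Type*} [NormedAddCommGroup Y] [NormedSpace ℂ Y]
  [NormedAddCommGroup F] [NormedSpace ℂ F] [CompleteSpace F]

noncomputable def cauchyTransform (g : ℂ × Y → F) (R : ℝ) (q : ℂ × Y) : F :=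
  (2 * Real.pi * I : ℂ)⁻¹ • ∮ u in C(0, R), (u - q.1)⁻¹ • g (u, q.2)

theorem analyticAt_cauchyTransform {g : ℂ × Y → F} {R : ℝ} {z : ℂ} {y : Y} (hz : ‖z‖ < R)
    (hg : ∀ u ∈ sphere (0 : ℂ) R, AnalyticAt ℂ g (u, y)) :
    AnalyticAt ℂ (cauchyTransform g R) (z, y) := by
  have hR : |R| = R := abs_of_pos ((norm_nonneg z).trans_lt hz)
  refine analyticAt_const.smul (analyticAt_circleIntegral
    (H := fun p : ℂ × ℂ × Y => (p.1 - p.2.1)⁻¹ • g (p.1, p.2.2)) fun u hu => ?_)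
  rw [hR] at hu
  have hzu : u - z ≠ 0 := sub_ne_zero.2 fun h => by
    rw [mem_sphere_zero_iff_norm] at hu; rw [h] at hu; linarith
  have hgu : AnalyticAt ℂ (fun q : ℂ × ℂ × Y => g (q.1, q.2.2)) (u, z, y) :=
    (hg u hu).comp (f := fun q : ℂ × ℂ × Y => (q.1, q.2.2)) (by fun_prop)
  exact ((by fun_prop : AnalyticAt ℂ (fun q : ℂ × ℂ × Y => q.1 - q.2.1) (u, z, y)).inv hzu).smul hgu

theorem cauchyTransform_eq {g h : ℂ × Y → F} {R : ℝ} {z : ℂ} {y : Y} (hz : ‖z‖ < R)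
    (hh : ∀ u, AnalyticAt ℂ h (u, y)) (hgh : ∀ u ∈ sphere (0 : ℂ) R, g (u, y) = h (u, y)) :
    cauchyTransform g R (z, y) = h (z, y) := by
  have hR : 0 ≤ R := (norm_nonneg z).trans hz.le
  have hdiff : DifferentiableOn ℂ (fun u => h (u, y)) (closedBall 0 R) := fun u _ =>
    ((hh u).comp (f := fun u : ℂ => (u, y)) (by fun_prop)).differentiableAt.differentiableWithinAt
  rw [cauchyTransform, circleIntegral.integral_congr (g := fun u => (u - z)⁻¹ • h (u, y)) hR
      fun u hu => by simp only [hgh u hu],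
    hdiff.circleIntegral_sub_inv_smul (by simpa using hz), smul_smul,
    inv_mul_cancel₀ (by simp [Real.pi_ne_zero]), one_smul]

theorem AnalyticOnNhd.exists_univ_prod_extension {g h : ℂ × Y → F} {Ω D : Set Y}
    (hg : AnalyticOnNhd ℂ g ({0}ᶜ ×ˢ Ω)) (hh : AnalyticOnNhd ℂ h (univ ×ˢ D))
    (hgh : EqOn g h ({0}ᶜ ×ˢ D)) (hΩo : IsOpen Ω) (hΩ : IsPreconnected Ω) (hDo : IsOpen D)
    (hD : D.Nonempty) (hDΩ : D ⊆ Ω) :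
    ∃ G, AnalyticOnNhd ℂ G (univ ×ˢ Ω) ∧ EqOn G g ({0}ᶜ ×ˢ Ω) := by
  have hT {R : ℝ} {z : ℂ} (hz : ‖z‖ < R) :
      AnalyticOnNhd ℂ (fun y => cauchyTransform g R (z, y)) Ω := fun y hy => by
    refine (analyticAt_cauchyTransform hz fun u hu => hg (u, y) ⟨?_, hy⟩).comp
      (f := fun y : Y => (z, y)) (by fun_prop)
    exact ne_of_mem_sphere hu ((norm_nonneg z).trans_lt hz).ne'
  have hTD {R : ℝ} {z : ℂ} (hz : ‖z‖ < R) : EqOn (fun y => cauchyTransform g R (z, y))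
      (fun y => h (z, y)) D := fun y hy => by
    refine cauchyTransform_eq hz (fun u => hh (u, y) ⟨trivial, hy⟩) fun u hu => hgh (x := (u, y))
      ⟨ne_of_mem_sphere hu ((norm_nonneg z).trans_lt hz).ne', hy⟩
  have hTT {R R' : ℝ} {z : ℂ} (hz : ‖z‖ < R) (hz' : ‖z‖ < R') :
      EqOn (fun y => cauchyTransform g R (z, y)) (fun y => cauchyTransform g R' (z, y)) Ω :=
    (hT hz).eqOn_of_preconnected_of_eqOn_of_isOpen (hT hz') hΩ hDo hD hDΩ
      ((hTD hz).trans (hTD hz').symm)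
  refine ⟨fun q => cauchyTransform g (‖q.1‖ + 1) q, fun q hq => ?_, fun q hq => ?_⟩ <;>
    have hq₁ : ‖q.1‖ < ‖q.1‖ + 1 := lt_add_one _
  · refine (analyticAt_cauchyTransform (g := g) hq₁ fun u hu => ?_).congr ?_
    · exact hg (u, q.2) ⟨ne_of_mem_sphere hu (by positivity), hq.2⟩
    · filter_upwards [(isOpen_lt (continuous_norm.comp continuous_fst) continuous_const).mem_nhds
          (show q ∈ {q' : ℂ × Y | ‖q'.1‖ < ‖q.1‖ + 1} from hq₁),
        (hΩo.preimage continuous_snd).mem_nhds hq.2] with q' hq' hΩ'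
      exact hTT hq' (lt_add_one _) hΩ'
  · have hgq : AnalyticOnNhd ℂ (fun y => g (q.1, y)) Ω := fun y hy =>
      (hg (q.1, y) ⟨hq.1, hy⟩).comp (f := fun y : Y => (q.1, y)) (by fun_prop)
    refine (hT hq₁).eqOn_of_preconnected_of_eqOn_of_isOpen hgq hΩ hDo hD hDΩ
      (fun y hy => (hTD hq₁ hy).trans (hgh (x := (q.1, y)) ⟨hq.1, hy⟩).symm) hq.2

end Hartogs

section Coordinates

variable {ι : Type*}

def nonvanishingOutside (A : Set ι) : Set (ι → ℂ) := {t | ∀ i ∉ A, t i ≠ 0}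

theorem nonvanishingOutside_eq_pi (A : Set ι) :
    nonvanishingOutside A = (Aᶜ).pi fun _ => {0}ᶜ := rfl

theorem nonvanishingOutside_empty :
    nonvanishingOutside (∅ : Set ι) = {t | ∀ i, t i ≠ 0} := by
  simp [nonvanishingOutside]

theorem nonvanishingOutside_univ : nonvanishingOutside (univ : Set ι) = univ := by
  simp [nonvanishingOutside]

theorem nonvanishingOutside_inter (A B : Set ι) :
    nonvanishingOutside A ∩ nonvanishingOutside B = nonvanishingOutside (A ∩ B) := by
  ext t; simp only [nonvanishingOutside, mem_inter_iff, mem_ofPred_eq, not_and_or]; grind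

theorem nonvanishingOutside_mono {A B : Set ι} (h : A ⊆ B) :
    nonvanishingOutside A ⊆ nonvanishingOutside B :=
  fun _ ht i hi => ht i fun hA => hi (h hA)

theorem isOpen_nonvanishingOutside [Finite ι] (A : Set ι) : IsOpen (nonvanishingOutside A) :=
  nonvanishingOutside_eq_pi A ▸ isOpen_set_pi (toFinite _) fun _ _ => isOpen_compl_singleton

theorem isPreconnected_nonvanishingOutside (A : Set ι) :
    IsPreconnected (nonvanishingOutside A) := by
  classical
  rw [nonvanishingOutside_eq_pi, ← univ_pi_ite]
  refine isPreconnected_univ_pi fun i => ?_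
  split_ifs
  · exact (isConnected_compl_singleton_of_one_lt_rank (by simp) 0).isPreconnected
  · exact isPreconnected_univ

theorem update_mem_nonvanishingOutside [DecidableEq ι] {t : ι → ℂ} {j : ι} {u : ℂ} {A : Set ι} :
    Function.update t j u ∈ nonvanishingOutside A ↔
      (j ∉ A → u ≠ 0) ∧ ∀ i ∉ A, i ≠ j → t i ≠ 0 := by
  simp only [nonvanishingOutside, mem_ofPred_eq, Function.update_apply]
  grind

end Coordinates

section CoordinateFunctions

variable {ι W : Type*} [Fintype ι] [NormedAddCommGroup W] [NormedSpace ℂ W]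

@[fun_prop]
theorem analyticAt_apply (i : ι) (t : ι → ℂ) : AnalyticAt ℂ (fun t : ι → ℂ => t i) t :=
  (ContinuousLinearMap.proj i : (ι → ℂ) →L[ℂ] ℂ).analyticAt t

theorem analyticAt_prod_zpow (s : Finset ι) (e : ι → ℤ) {p : (ι → ℂ) × W}
    (hp : ∀ i ∈ s, p.1 i ≠ 0) : AnalyticAt ℂ (fun q : (ι → ℂ) × W => ∏ i ∈ s, q.1 i ^ e i) p :=
  Finset.analyticAt_fun_prod s fun i hi =>
    (by fun_prop : AnalyticAt ℂ (fun q : (ι → ℂ) × W => q.1 i) p).zpow (hp i hi)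

theorem analyticAt_update [DecidableEq ι] (j : ι) (q : ℂ × (ι → ℂ) × W) :
    AnalyticAt ℂ (fun q : ℂ × (ι → ℂ) × W => (Function.update q.2.1 j q.1, q.2.2)) q := by
  refine AnalyticAt.prod ?_ (by fun_prop)
  refine analyticAt_pi_iff.2 fun i => ?_
  rcases eq_or_ne i j with rfl | hij
  · simpa using analyticAt_fst
  · simp only [Function.update_of_ne hij]
    fun_prop

end CoordinateFunctions

section Extension

variable {ι W F : Type*} [Fintype ι] [DecidableEq ι] [NormedAddCommGroup W] [NormedSpace ℂ W]
  [NormedAddCommGroup F] [NormedSpace ℂ F] [CompleteSpace F]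

theorem AnalyticOnNhd.exists_insert_extension {j : ι} {A : Set ι} (hj : j ∉ A)
    {g h : (ι → ℂ) × W → F} (hg : AnalyticOnNhd ℂ g (nonvanishingOutside A ×ˢ univ))
    (hh : AnalyticOnNhd ℂ h (nonvanishingOutside {j} ×ˢ univ))
    (hgh : EqOn g h ((nonvanishingOutside A ∩ nonvanishingOutside {j}) ×ˢ univ)) :
    ∃ G, AnalyticOnNhd ℂ G (nonvanishingOutside (insert j A) ×ˢ univ) ∧
      EqOn G g (nonvanishingOutside A ×ˢ univ) := by
  -- `L (u, p)` puts the new variable `u` into coordinate `j`, so `p j` plays no role.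
  set L : ℂ × (ι → ℂ) × W → (ι → ℂ) × W := fun q => (Function.update q.2.1 j q.1, q.2.2)
  have hD : nonvanishingOutside {j} ⊆ nonvanishingOutside (insert j A) :=
    nonvanishingOutside_mono (by simp)
  have hLg : ∀ q ∈ {0}ᶜ ×ˢ (nonvanishingOutside (insert j A) ×ˢ univ),
      L q ∈ nonvanishingOutside A ×ˢ univ := by
    rintro ⟨u, t, w⟩ ⟨hu, ht, -⟩
    refine ⟨update_mem_nonvanishingOutside.2 ⟨fun _ => hu, fun i hi hij => ht i ?_⟩, trivial⟩
    simp [hi, hij]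
  have hLh : ∀ q ∈ univ ×ˢ (nonvanishingOutside {j} ×ˢ univ),
      L q ∈ nonvanishingOutside {j} ×ˢ univ := by
    rintro ⟨u, t, w⟩ ⟨-, ht, -⟩
    exact ⟨update_mem_nonvanishingOutside.2 ⟨fun h => (h rfl).elim, fun i hi _ => ht i hi⟩, trivial⟩
  obtain ⟨G, hG, hGg⟩ := AnalyticOnNhd.exists_univ_prod_extension (g := g ∘ L) (h := h ∘ L)
    (Ω := nonvanishingOutside (insert j A) ×ˢ univ) (D := nonvanishingOutside {j} ×ˢ univ)
    (fun q hq => (hg _ (hLg q hq)).comp (analyticAt_update j q))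
    (fun q hq => (hh _ (hLh q ⟨trivial, hq.2⟩)).comp (analyticAt_update j q))
    (fun q hq => hgh ⟨⟨(hLg q ⟨hq.1, prod_mono hD le_rfl hq.2⟩).1, (hLh q ⟨trivial, hq.2⟩).1⟩,
      trivial⟩)
    ((isOpen_nonvanishingOutside _).prod isOpen_univ)
    ((isPreconnected_nonvanishingOutside _).prod isPreconnected_univ)
    ((isOpen_nonvanishingOutside _).prod isOpen_univ)
    ⟨(fun _ => 1, 0), by simp [nonvanishingOutside]⟩ (prod_mono hD le_rfl)
  refine ⟨fun p => G (p.1 j, p), fun p hp => (hG _ ⟨trivial, hp⟩).comp (by fun_prop),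
    fun p hp => ?_⟩
  have := hGg (x := (p.1 j, p))
    ⟨hp.1 j hj, prod_mono (nonvanishingOutside_mono (subset_insert j A)) le_rfl hp⟩
  simpa [L] using this

theorem exists_analyticOnNhd_univ_of_forall_coord {f : (ι → ℂ) × W → F}
    (hf : AnalyticOnNhd ℂ f ({t | ∀ i, t i ≠ 0} ×ˢ univ))
    (hext : ∀ j, ∃ h, AnalyticOnNhd ℂ h (nonvanishingOutside {j} ×ˢ univ) ∧
      EqOn h f ({t | ∀ i, t i ≠ 0} ×ˢ univ)) :
    ∃ G, AnalyticOnNhd ℂ G univ ∧ EqOn G f ({t | ∀ i, t i ≠ 0} ×ˢ univ) := by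
  rw [← nonvanishingOutside_empty] at hf hext ⊢
  suffices ∀ A : Finset ι, ∃ G, AnalyticOnNhd ℂ G (nonvanishingOutside A ×ˢ univ) ∧
      EqOn G f (nonvanishingOutside ∅ ×ˢ univ) by
    simpa [nonvanishingOutside_univ] using this Finset.univ
  intro A
  induction A using Finset.induction_on with
  | empty => exact ⟨f, by simpa using hf, eqOn_refl _ _⟩
  | insert j A hj ih =>
    obtain ⟨G, hG, hGf⟩ := ih
    obtain ⟨h, hh, hhf⟩ := hext j
    have hA : nonvanishingOutside (A : Set ι) ∩ nonvanishingOutside {j} =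
        nonvanishingOutside ∅ := by
      rw [nonvanishingOutside_inter, Set.inter_singleton_eq_empty.2 (by simpa using hj)]
    obtain ⟨G', hG', hG'G⟩ := hG.exists_insert_extension (by simpa using hj) hh
      (hA ▸ hGf.trans hhf.symm)
    refine ⟨G', by simpa using hG', fun p hp => (hG'G ?_).trans (hGf hp)⟩
    exact prod_mono (nonvanishingOutside_mono (empty_subset _)) le_rfl hp

end Extension

theorem stmt_13_general (n k : ℕ)
    (f : ((Fin n → ℂ) × (Fin k → ℂ)) → ℂ)
    (hf : AnalyticOnNhd ℂ f
      ({t : Fin n → ℂ | ∀ i, t i ≠ 0} ×ˢ (Set.univ : Set (Fin k → ℂ))))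
    (l : Fin n → ℤ) :
    (∃ F : ((Fin n → ℂ) × (Fin k → ℂ)) → ℂ,
      AnalyticOnNhd ℂ F (Set.univ : Set ((Fin n → ℂ) × (Fin k → ℂ))) ∧
      ∀ p ∈ {t : Fin n → ℂ | ∀ i, t i ≠ 0} ×ˢ (Set.univ : Set (Fin k → ℂ)),
        F p = (∏ i, p.1 i ^ (-(l i))) * f p) ↔
    (∀ j : Fin n, ∃ F : ((Fin n → ℂ) × (Fin k → ℂ)) → ℂ,
      AnalyticOnNhd ℂ F
        ({t : Fin n → ℂ | ∀ i, i ≠ j → t i ≠ 0} ×ˢ (Set.univ : Set (Fin k → ℂ))) ∧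
      ∀ p ∈ {t : Fin n → ℂ | ∀ i, t i ≠ 0} ×ˢ (Set.univ : Set (Fin k → ℂ)),
        F p = p.1 j ^ (-(l j)) * f p) := by
  constructor
  · rintro ⟨F, hF, hFf⟩ j
    refine ⟨fun p => (∏ i ∈ Finset.univ.erase j, p.1 i ^ l i) * F p, fun p hp => ?_, fun p hp => ?_⟩
    · exact (analyticAt_prod_zpow _ l fun i hi => hp.1 i (Finset.ne_of_mem_erase hi)).mul
        (hF p trivial)
    · have hne : ∏ i ∈ Finset.univ.erase j, p.1 i ^ l i ≠ 0 :=
        Finset.prod_ne_zero_iff.2 fun i _ => zpow_ne_zero _ (hp.1 i)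
      dsimp only
      rw [hFf p hp, ← Finset.mul_prod_erase Finset.univ _ (Finset.mem_univ j)]
      simp only [zpow_neg, Finset.prod_inv_distrib]
      field_simp
  · intro hR
    refine exists_analyticOnNhd_univ_of_forall_coord
      (fun p hp => (analyticAt_prod_zpow _ _ fun i _ => hp.1 i).mul (hf p hp)) fun j => ?_
    obtain ⟨F, hF, hFf⟩ := hR j
    refine ⟨fun p => (∏ i ∈ Finset.univ.erase j, p.1 i ^ (-l i)) * F p, fun p hp => ?_,
      fun p hp => ?_⟩
    · exact (analyticAt_prod_zpow _ _ fun i hi => hp.1 i (Finset.ne_of_mem_erase hi)).mul (hF p hp)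
    · simp only [hFf p hp, ← mul_assoc, Finset.prod_erase_mul _ _ (Finset.mem_univ j)]

/-- Proposition "prop:all j" for the trivial family ℂⁿ × ℂᵏ → ℂⁿ: the
twisted function t^{−ℓ⃗} f extends holomorphically to ℂⁿ × ℂᵏ if and only if, for each j,
the function t_j^{−ℓ_j} f extends holomorphically across the hyperplane {t_j = 0}. -/
theorem stmt_13 (n k : ℕ) (hn : 1 ≤ n)
    (f : ((Fin n → ℂ) × (Fin k → ℂ)) → ℂ)
    (hf : AnalyticOnNhd ℂ f
      ({t : Fin n → ℂ | ∀ i, t i ≠ 0} ×ˢ (Set.univ : Set (Fin k → ℂ))))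
    (l : Fin n → ℤ) :
    (∃ F : ((Fin n → ℂ) × (Fin k → ℂ)) → ℂ,
      AnalyticOnNhd ℂ F (Set.univ : Set ((Fin n → ℂ) × (Fin k → ℂ))) ∧
      ∀ p ∈ {t : Fin n → ℂ | ∀ i, t i ≠ 0} ×ˢ (Set.univ : Set (Fin k → ℂ)),
        F p = (∏ i, p.1 i ^ (-(l i))) * f p) ↔
    (∀ j : Fin n, ∃ F : ((Fin n → ℂ) × (Fin k → ℂ)) → ℂ,
      AnalyticOnNhd ℂ F
        ({t : Fin n → ℂ | ∀ i, i ≠ j → t i ≠ 0} ×ˢ (Set.univ : Set (Fin k → ℂ))) ∧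
      ∀ p ∈ {t : Fin n → ℂ | ∀ i, t i ≠ 0} ×ˢ (Set.univ : Set (Fin k → ℂ)),
        F p = p.1 j ^ (-(l j)) * f p) :=
  stmt_13_general n k f hf l
end

section
/- Let p, q, r be 3×3 complex matrices with p₃₁ = p₃₂ = 0, q₂₁ = q₃₁ = 0, and r₃₁ = r₃₂ = 0. For t ∈ ℂ with t ≠ 0 let S(t) denote the diagonal matrix diag(t, 1, t⁻¹). For nonzero t₁, t₂, t₃ ∈ ℂ, set P = S(t₁)⁻¹ p, Q = S(t₂)⁻¹ q, and R' = S(t₃)⁻¹ r. Then ((PQ)₁₁ (PQ)₂₂ − (PQ)₁₂ (PQ)₂₁) · (PQR')₁₁ = t₁⁻² t₂⁻² t₃⁻¹ · ( q₁₁ q₂₂ (p₁₁ p₂₂ − p₁₂ p₂₁) + t₂ q₁₁ q₃₂ (p₁₁ p₂₃ − p₁₃ p₂₁) ) · ( p₁₁ q₁₁ r₁₁ + (t₃ p₁₁ q₁₂ + t₂ t₃ p₁₂ q₂₂ + t₂² t₃ p₁₃ q₃₂) r₂₁ ). -/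
/-!
Since `q` has zeros below its (1,1) entry, Cauchy–Binet leaves only two terms in the leading
2×2 minor of `PQ`, and since `r₃₁ = 0` the entry `(PQR')₁₁` has two terms as well. Multiplying by
`S(t)⁻¹ = diag(t⁻¹, 1, t)` only rescales rows, which produces the powers of the `tᵢ`.
-/

open Matrix

namespace Matrix

variable {R : Type*} [CommRing R]

theorem mul_apply_zero_zero_of_apply_one_zero_of_apply_two_zero {A B : Matrix (Fin 3) (Fin 3) R}
    (hB₁ : B 1 0 = 0) (hB₂ : B 2 0 = 0) : (A * B) 0 0 = A 0 0 * B 0 0 := by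
  simp [mul_apply, Fin.sum_univ_three, hB₁, hB₂]

theorem mul_apply_zero_zero_of_apply_two_zero {A B : Matrix (Fin 3) (Fin 3) R}
    (hB : B 2 0 = 0) : (A * B) 0 0 = A 0 0 * B 0 0 + A 0 1 * B 1 0 := by
  simp [mul_apply, Fin.sum_univ_three, hB]

theorem leadingMinor_mul_of_apply_one_zero_of_apply_two_zero {A B : Matrix (Fin 3) (Fin 3) R}
    (hB₁ : B 1 0 = 0) (hB₂ : B 2 0 = 0) :
    (A * B) 0 0 * (A * B) 1 1 - (A * B) 0 1 * (A * B) 1 0 =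
      B 0 0 * B 1 1 * (A 0 0 * A 1 1 - A 0 1 * A 1 0) +
        B 0 0 * B 2 1 * (A 0 0 * A 1 2 - A 0 2 * A 1 0) := by
  simp only [mul_apply, Fin.sum_univ_three, hB₁, hB₂]
  ring

theorem inv_diagonal_cons_one_inv {K : Type*} [Field K] {t : K} (ht : t ≠ 0) :
    (diagonal ![t, 1, t⁻¹])⁻¹ = diagonal ![t⁻¹, 1, t] := by
  refine inv_eq_right_inv ?_
  rw [diagonal_mul_diagonal, ← diagonal_one]
  congr 1
  ext i
  fin_cases i <;> simp [ht]

end Matrix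

theorem stmt_15_general (p q r : Matrix (Fin 3) (Fin 3) ℂ)
    (hq1 : q 1 0 = 0) (hq2 : q 2 0 = 0)
    (hr1 : r 2 0 = 0)
    (S : ℂ → Matrix (Fin 3) (Fin 3) ℂ)
    (hS : ∀ t : ℂ, S t = Matrix.diagonal ![t, 1, t⁻¹])
    (t₁ t₂ t₃ : ℂ) (ht₁ : t₁ ≠ 0) (ht₂ : t₂ ≠ 0) (ht₃ : t₃ ≠ 0)
    (P Q R' : Matrix (Fin 3) (Fin 3) ℂ)
    (hP : P = (S t₁)⁻¹ * p) (hQ : Q = (S t₂)⁻¹ * q) (hR' : R' = (S t₃)⁻¹ * r) :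
    ((P * Q) 0 0 * (P * Q) 1 1 - (P * Q) 0 1 * (P * Q) 1 0) * (P * Q * R') 0 0 =
      t₁ ^ (-2 : ℤ) * t₂ ^ (-2 : ℤ) * t₃ ^ (-1 : ℤ) *
        (q 0 0 * q 1 1 * (p 0 0 * p 1 1 - p 0 1 * p 1 0) +
          t₂ * (q 0 0 * q 2 1 * (p 0 0 * p 1 2 - p 0 2 * p 1 0))) *
        (p 0 0 * q 0 0 * r 0 0 +
          (t₃ * (p 0 0 * q 0 1) + t₂ * t₃ * (p 0 1 * q 1 1) +
            t₂ ^ 2 * t₃ * (p 0 2 * q 2 1)) * r 1 0) := by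
  subst hP hQ hR'
  simp only [hS, inv_diagonal_cons_one_inv ht₁, inv_diagonal_cons_one_inv ht₂,
    inv_diagonal_cons_one_inv ht₃]
  have hQ₁ : (diagonal ![t₂⁻¹, 1, t₂] * q) 1 0 = 0 := by simp [hq1]
  have hQ₂ : (diagonal ![t₂⁻¹, 1, t₂] * q) 2 0 = 0 := by simp [hq2]
  have hR : (diagonal ![t₃⁻¹, 1, t₃] * r) 2 0 = 0 := by simp [hr1]
  rw [leadingMinor_mul_of_apply_one_zero_of_apply_two_zero hQ₁ hQ₂,
    mul_apply_zero_zero_of_apply_two_zero hR,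
    mul_apply_zero_zero_of_apply_one_zero_of_apply_two_zero hQ₁ hQ₂,
    mul_apply (M := diagonal _ * p), Fin.sum_univ_three]
  simp only [diagonal_mul, Fin.isValue, cons_val_zero, cons_val_one, cons_val_two, head_cons,
    tail_cons, one_mul, _root_.zpow_neg, zpow_ofNat]
  field_simp

/-- the explicit computation, in SL(3), of the standard-tableau section
Δ₁₂₁ evaluated at (S(t₁)⁻¹p, S(t₂)⁻¹q, S(t₃)⁻¹r), exhibiting the leading monomial
t₁⁻²t₂⁻²t₃⁻¹ (so the ℓ-vector of s₍₁₂₁₎ is (−2,−2,−1)). Indices are 0-based: `p 0 0`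
is the paper's p₁₁. -/
theorem stmt_15 (p q r : Matrix (Fin 3) (Fin 3) ℂ)
    (hp1 : p 2 0 = 0) (hp2 : p 2 1 = 0)
    (hq1 : q 1 0 = 0) (hq2 : q 2 0 = 0)
    (hr1 : r 2 0 = 0) (hr2 : r 2 1 = 0)
    (S : ℂ → Matrix (Fin 3) (Fin 3) ℂ)
    (hS : ∀ t : ℂ, S t = Matrix.diagonal ![t, 1, t⁻¹])
    (t₁ t₂ t₃ : ℂ) (ht₁ : t₁ ≠ 0) (ht₂ : t₂ ≠ 0) (ht₃ : t₃ ≠ 0)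
    (P Q R' : Matrix (Fin 3) (Fin 3) ℂ)
    (hP : P = (S t₁)⁻¹ * p) (hQ : Q = (S t₂)⁻¹ * q) (hR' : R' = (S t₃)⁻¹ * r) :
    ((P * Q) 0 0 * (P * Q) 1 1 - (P * Q) 0 1 * (P * Q) 1 0) * (P * Q * R') 0 0 =
      t₁ ^ (-2 : ℤ) * t₂ ^ (-2 : ℤ) * t₃ ^ (-1 : ℤ) *
        (q 0 0 * q 1 1 * (p 0 0 * p 1 1 - p 0 1 * p 1 0) +
          t₂ * (q 0 0 * q 2 1 * (p 0 0 * p 1 2 - p 0 2 * p 1 0))) *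
        (p 0 0 * q 0 0 * r 0 0 +
          (t₃ * (p 0 0 * q 0 1) + t₂ * t₃ * (p 0 1 * q 1 1) +
            t₂ ^ 2 * t₃ * (p 0 2 * q 2 1)) * r 1 0) :=
  stmt_15_general p q r hq1 hq2 hr1 S hS t₁ t₂ t₃ ht₁ ht₂ ht₃ P Q R' hP hQ hR'
end
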